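/- arXiv:1911.01465 — 11 statements merged into one kernel-verified Lean document; each statement's English description precedes it below -/
import Mathlib

section
/- Let t, r ∈ ℕ and let N ⊆ {0,1}^d be a finite set of t-vectors such that the family {Δ(n) : n ∈ N} is a sunflower with core C, i.e., Δ(n) ∩ Δ(n') = C for any two distinct n, n' ∈ N. If |N| > r, then for every vector a ∈ {0,1}^d with |Δ(a)| ≤ r there exists n ∈ N such that δ(x,a) ≤ δ(n,a) for every t-vector x ∈ {0,1}^d with C ⊆ Δ(x); that is, N contains a vector of maximum Hamming distance to a among all t-vectors containing C. -/
/-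
Since `δ(x, a) = |Δ(x)| + |Δ(a)| - 2 |Δ(x) ∩ Δ(a)|`, among t-vectors the distance to `a`
is largest when the overlap with `Δ(a)` is smallest, and any `x ⊇ C` overlaps `Δ(a)` at least in
`C ∩ Δ(a)`. The petals `Δ(n) \ C` are pairwise disjoint, so at most `|Δ(a)| ≤ r < |N|` of them can
meet `Δ(a)`; hence some `n ∈ N` has `Δ(n) ∩ Δ(a) ⊆ C`, and this `n` is farthest from `a`.
-/

/-- The set of coordinates where a Boolean vector equals `true` (i.e. Δ(a)). -/
def ones {d : ℕ} (a : Fin d → Bool) : Finset (Fin d) :=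
  Finset.univ.filter fun i => a i = true

open Finset

theorem Finset.exists_inter_subset_core_of_card_lt {ι α : Type*} [DecidableEq α]
    {N : Finset ι} {petal : ι → Finset α} {C A : Finset α}
    (hsun : ∀ n ∈ N, ∀ n' ∈ N, n ≠ n' → petal n ∩ petal n' ⊆ C) (hA : #A < #N) :
    ∃ n ∈ N, petal n ∩ A ⊆ C := by
  by_contra! hmeet
  have hdisj : (N : Set ι).PairwiseDisjoint fun n => (petal n ∩ A) \ C := by
    intro n hn n' hn' hne
    refine disjoint_left.mpr fun i hi hi' => ?_
    simp only [mem_sdiff, mem_inter] at hi hi'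
    exact hi.2 (hsun n hn n' hn' hne (mem_inter.mpr ⟨hi.1.1, hi'.1.1⟩))
  have hnonempty : ∀ n ∈ N, ((petal n ∩ A) \ C).Nonempty := fun n hn =>
    sdiff_nonempty.mpr (hmeet n hn)
  have hsubA : N.biUnion (fun n => (petal n ∩ A) \ C) ⊆ A :=
    biUnion_subset.mpr fun _ _ => sdiff_subset.trans inter_subset_right
  have := (card_le_card_biUnion hdisj hnonempty).trans (card_le_card hsubA)
  omega

section Hamming

variable {d : ℕ}

theorem hammingDist_add_card_inter_ones (x a : Fin d → Bool) :
    hammingDist x a + #(ones x ∩ ones a) = #(ones x ∪ ones a) := by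
  rw [hammingDist, ← card_union_of_disjoint]
  · congr 1
    ext i
    cases hx : x i <;> cases ha : a i <;> simp [ones, hx, ha]
  · exact disjoint_left.mpr fun i hi hi' => by simp_all [ones]

theorem hammingDist_add_two_mul_card_inter_ones (x a : Fin d → Bool) :
    hammingDist x a + 2 * #(ones x ∩ ones a) = #(ones x) + #(ones a) := by
  have := hammingDist_add_card_inter_ones x a
  have := card_union_add_card_inter (ones x) (ones a)
  omega

theorem hammingDist_le_hammingDist_of_inter_ones_subset {x n a : Fin d → Bool}
    (hcard : #(ones x) = #(ones n)) (hsub : ones n ∩ ones a ⊆ ones x ∩ ones a) :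
    hammingDist x a ≤ hammingDist n a := by
  have := card_le_card hsub
  have := hammingDist_add_two_mul_card_inter_ones x a
  have := hammingDist_add_two_mul_card_inter_ones n a
  omega

end Hamming

theorem statement_0 {d : ℕ} (t r : ℕ) (N : Finset (Fin d → Bool)) (C : Finset (Fin d))
    (htvec : ∀ n ∈ N, (ones n).card = t)
    (hsun : ∀ n ∈ N, ∀ n' ∈ N, n ≠ n' → ones n ∩ ones n' = C)
    (hbig : r < N.card) :
    ∀ a : Fin d → Bool, (ones a).card ≤ r →
      ∃ n ∈ N, ∀ x : Fin d → Bool, (ones x).card = t → C ⊆ ones x →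
        hammingDist x a ≤ hammingDist n a := by
  intro a ha
  obtain ⟨n, hn, hcore⟩ := exists_inter_subset_core_of_card_lt (petal := ones) (A := ones a)
    (fun n hn n' hn' hne => (hsun n hn n' hn' hne).subset) (by omega)
  refine ⟨n, hn, fun x hxt hCx => ?_⟩
  refine hammingDist_le_hammingDist_of_inter_ones_subset (by rw [hxt, htvec n hn]) ?_
  exact subset_inter (hcore.trans hCx) inter_subset_right
end

section
/- Let t, r ∈ ℕ, v ∈ {0,1}^d, and let N ⊆ {0,1}^d be a finite set with δ(v,x) = t for every x ∈ N, such that the family {Δ(v,x) : x ∈ N} is a sunflower with core C, i.e., Δ(v,x) ∩ Δ(v,x') = C for any two distinct x, x' ∈ N. Then for every subset N' ⊆ N with |N'| ≥ r + t + 2 and every vector a ∈ {0,1}^d with min_{x∈N'} δ(x,a) ≤ r, it holds for every f ∈ N that δ(f,a) ≤ max_{x ∈ N' \ {f}} δ(x,a). -/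
/-- Δ(a,b): the set of coordinates on which two Boolean vectors differ. -/
def diffSet {d : ℕ} (a b : Fin d → Bool) : Finset (Fin d) :=
  Finset.univ.filter fun i => a i ≠ b i

/-!
Write `A = Δ(v,a)` and `D x = Δ(v,x)`. Then `Δ(x,a) = A ∆ D x`, so for `x ∈ N` we get
`δ(x,a) = |A| + t - 2 |A ∩ D x|`, and `δ(f,a) ≤ δ(x,a)` as soon as `A ∩ D x ⊆ D f`.
The petals `D x \ C` are pairwise disjoint and `|A| ≤ t + r < |N' \ {f}|` by the triangle
inequality, so some `x ∈ N' \ {f}` has a petal missing `A`, i.e. `A ∩ D x ⊆ C ⊆ D f`.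
-/

namespace Finset

variable {α ι : Type*} [DecidableEq α]

theorem card_symmDiff_add_two_mul_card_inter (A D : Finset α) :
    (symmDiff A D).card + 2 * (A ∩ D).card = A.card + D.card := by
  rw [symmDiff_eq_sup_sdiff_inf, sup_eq_union, inf_eq_inter,
    card_sdiff_of_subset inter_subset_union, ← card_union_add_card_inter]
  have := card_le_card (inter_subset_union (s := A) (t := D))
  omega

theorem card_symmDiff_le_of_inter_subset {A D D' : Finset α} (hcard : D'.card ≤ D.card)
    (hinter : A ∩ D ⊆ A ∩ D') : (symmDiff A D').card ≤ (symmDiff A D).card := by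
  have := card_le_card hinter
  have := card_symmDiff_add_two_mul_card_inter A D
  have := card_symmDiff_add_two_mul_card_inter A D'
  omega

def IsSunflower (s : Finset ι) (D : ι → Finset α) (C : Finset α) : Prop :=
  ∀ i ∈ s, ∀ j ∈ s, i ≠ j → D i ∩ D j = C

namespace IsSunflower

variable {s : Finset ι} {D : ι → Finset α} {C : Finset α}

theorem mono {t : Finset ι} (h : IsSunflower s D C) (hts : t ⊆ s) : IsSunflower t D C :=
  fun i hi j hj => h i (hts hi) j (hts hj)

theorem core_subset (h : IsSunflower s D C) {i j : ι} (hi : i ∈ s) (hj : j ∈ s) (hij : i ≠ j) :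
    C ⊆ D i :=
  h i hi j hj hij ▸ inter_subset_left

theorem exists_inter_subset_core_of_card_lt (h : IsSunflower s D C) {A : Finset α}
    (hA : A.card < s.card) : ∃ i ∈ s, A ∩ D i ⊆ C := by
  by_contra! hnot
  have hdisj : (s : Set ι).PairwiseDisjoint fun i => (A ∩ D i) \ C := by
    intro i hi j hj hij
    refine disjoint_left.mpr fun x hxi hxj => (mem_sdiff.mp hxi).2 ?_
    rw [← h i hi j hj hij]
    exact mem_inter.mpr
      ⟨(mem_inter.mp (mem_sdiff.mp hxi).1).2, (mem_inter.mp (mem_sdiff.mp hxj).1).2⟩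
  have hne : ∀ i ∈ s, ((A ∩ D i) \ C).Nonempty := fun i hi => sdiff_nonempty.mpr (hnot i hi)
  have hsub : s.biUnion (fun i => (A ∩ D i) \ C) ⊆ A :=
    biUnion_subset.mpr fun _ _ => sdiff_subset.trans inter_subset_left
  exact hA.not_ge ((card_le_card_biUnion hdisj hne).trans (card_le_card hsub))

end IsSunflower

end Finset

open Finset

theorem hammingDist_eq_card_diffSet {d : ℕ} (x y : Fin d → Bool) :
    hammingDist x y = (diffSet x y).card :=
  rfl

theorem diffSet_eq_symmDiff {d : ℕ} (v x a : Fin d → Bool) :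
    diffSet x a = symmDiff (diffSet v a) (diffSet v x) := by
  ext i
  simp only [diffSet, mem_symmDiff, mem_filter, mem_univ, true_and]
  cases v i <;> cases a i <;> cases x i <;> decide

theorem hammingDist_le_of_inter_subset {d : ℕ} {v x y a : Fin d → Bool}
    (hcard : hammingDist v y ≤ hammingDist v x)
    (hinter : diffSet v a ∩ diffSet v x ⊆ diffSet v y) :
    hammingDist y a ≤ hammingDist x a := by
  rw [hammingDist_eq_card_diffSet, hammingDist_eq_card_diffSet, diffSet_eq_symmDiff v y,
    diffSet_eq_symmDiff v x]
  exact card_symmDiff_le_of_inter_subset hcard (subset_inter inter_subset_left hinter)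

theorem statement_1 {d : ℕ} (t r : ℕ) (v : Fin d → Bool)
    (N : Finset (Fin d → Bool)) (C : Finset (Fin d))
    (hdist : ∀ x ∈ N, hammingDist v x = t)
    (hsun : ∀ x ∈ N, ∀ x' ∈ N, x ≠ x' → diffSet v x ∩ diffSet v x' = C) :
    ∀ N' ⊆ N, r + t + 2 ≤ N'.card →
      ∀ a : Fin d → Bool, (∃ x ∈ N', hammingDist x a ≤ r) →
        ∀ f ∈ N, hammingDist f a ≤ (N'.erase f).sup fun x => hammingDist x a := by
  intro N' hN' hcard a ⟨x₀, hx₀, hx₀a⟩ f hf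
  have hsunflower : IsSunflower N (diffSet v) C := hsun
  have hva : (diffSet v a).card < (N'.erase f).card := by
    have := hammingDist_triangle v x₀ a
    have := hdist x₀ (hN' hx₀)
    have := pred_card_le_card_erase (s := N') (a := f)
    rw [← hammingDist_eq_card_diffSet]
    omega
  obtain ⟨x, hx, hxC⟩ :=
    (hsunflower.mono ((erase_subset f N').trans hN')).exists_inter_subset_core_of_card_lt hva
  obtain ⟨hxf, hxN'⟩ := mem_erase.mp hx
  have hCf : C ⊆ diffSet v f := hsunflower.core_subset hf (hN' hxN') hxf.symm
  calc hammingDist f a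
      ≤ hammingDist x a :=
        hammingDist_le_of_inter_subset ((hdist f hf).trans (hdist x (hN' hxN')).symm).le
          (hxC.trans hCf)
    _ ≤ (N'.erase f).sup fun y => hammingDist y a := le_sup (f := fun y => hammingDist y a) hx
end

section
/- Let M be a finite multiset of vectors in {0,1,□}^d with cover (R_M, T_M), let ρ ∈ ℕ, and let M' ⊆ M \ R_M be nonempty such that the compatibility graph on M' with threshold ρ is connected. Let Z(M') be the set of coordinates i ∈ [d] for which there exist y, y' ∈ M' with {y[i], y'[i]} = {0,1}. Then |Z(M') \ T_M| ≤ γ(M')·(|M'| − 1). -/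
open scoped Classical

/-- δ(a,b) for incomplete vectors: the number of coordinates on which
both entries are known and differ. -/
noncomputable def pdist {ι : Type} [Fintype ι] (a b : ι → Option Bool) : ℕ :=
  (Finset.univ.filter fun i => ∃ x y : Bool, a i = some x ∧ b i = some y ∧ x ≠ y).card

/-- The compatibility graph on a finite set of incomplete vectors with threshold ρ. -/
def compatGraph {ι : Type} [Fintype ι] (S : Finset (ι → Option Bool)) (ρ : ℕ) :
    SimpleGraph {x // x ∈ S} :=
  SimpleGraph.fromRel fun a b => pdist a.1 b.1 ≤ ρ

/-- γ(S): the diameter (maximum pairwise δ) of a finite multiset of incomplete vectors. -/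
noncomputable def mdiam {ι : Type} [Fintype ι] (S : Multiset (ι → Option Bool)) : ℕ :=
  (S.toFinset ×ˢ S.toFinset).sup fun p => pdist p.1 p.2

/-! The coordinates of `Z(M') \ T_M` are defined on every vector of `M'`, and each one takes both
values `0` and `1` on `M'`. Along a spanning tree of the compatibility graph, such a coordinate must
therefore switch value across some tree edge `ab`, i.e. lie in `Δ(a, b)`. A spanning tree on
`|M'.toFinset| ≤ |M'|` vertices has `|M'.toFinset| - 1` edges, and each `Δ(a, b)` has at most
`γ(M')` elements. -/

namespace SimpleGraph

variable {V α β : Type*} {G : SimpleGraph V}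

theorem Reachable.exists_adj_apply_ne {f : V → β} {x y : V} (h : G.Reachable x y)
    (hxy : f x ≠ f y) : ∃ u v, G.Adj u v ∧ f u ≠ f v := by
  obtain ⟨p⟩ := h
  obtain ⟨d, -, hd₁, hd₂⟩ := p.exists_boundary_dart {w | f w = f x} rfl hxy.symm
  exact ⟨d.fst, d.snd, d.adj, fun h => hd₂ (h.symm.trans hd₁)⟩

/-- The sets `D u v` over the edges of a spanning tree already cover `Z`. -/
theorem Connected.card_le_mul_card_sub_one [Fintype V] (hG : G.Connected)
    (D : V → V → Finset α) {k : ℕ} (hD : ∀ u v, G.Adj u v → (D u v).card ≤ k)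
    {Z : Finset α} (f : α → V → β) (hZ : ∀ i ∈ Z, ∃ x y, f i x ≠ f i y)
    (hf : ∀ i ∈ Z, ∀ u v, G.Adj u v → f i u ≠ f i v → i ∈ D u v) :
    Z.card ≤ k * (Fintype.card V - 1) := by
  classical
  obtain ⟨H, hHG, hH⟩ := hG.exists_isTree_le
  -- `Quot.out` orients each edge of the tree
  let E : Sym2 V → Finset α := fun e => D e.out.1 e.out.2
  have hout : ∀ e : Sym2 V, s(e.out.1, e.out.2) = e := Quot.out_eq
  have hE : ∀ e ∈ H.edgeFinset, H.Adj e.out.1 e.out.2 := fun e he => by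
    rw [← mem_edgeSet, hout]
    exact mem_edgeFinset.1 he
  have hcover : Z ⊆ H.edgeFinset.biUnion E := by
    intro i hi
    obtain ⟨x, y, hxy⟩ := hZ i hi
    obtain ⟨u, v, huv, hne⟩ := (hH.connected.preconnected x y).exists_adj_apply_ne hxy
    have hmem : s(u, v) ∈ H.edgeFinset := mem_edgeFinset.2 huv
    refine Finset.mem_biUnion.2 ⟨s(u, v), hmem, hf i hi _ _ (hHG (hE _ hmem)) ?_⟩
    rcases Sym2.eq_iff.1 (hout s(u, v)) with ⟨h₁, h₂⟩ | ⟨h₁, h₂⟩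
    · rwa [h₁, h₂]
    · rw [h₁, h₂]; exact hne.symm
  have hcard := hH.card_edgeFinset
  calc Z.card ≤ (H.edgeFinset.biUnion E).card := Finset.card_le_card hcover
    _ ≤ H.edgeFinset.card * k :=
        Finset.card_biUnion_le_card_mul _ _ _ fun e he => hD _ _ (hHG (hE e he))
    _ = k * (Fintype.card V - 1) := by rw [mul_comm]; congr 1; omega

end SimpleGraph

/-- `Δ(a, b)`. -/
noncomputable def pdiff {ι : Type} [Fintype ι] (a b : ι → Option Bool) : Finset ι :=
  Finset.univ.filter fun i => ∃ x y : Bool, a i = some x ∧ b i = some y ∧ x ≠ y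

section IncompleteVectors

variable {ι : Type} [Fintype ι]

theorem pdist_eq_card_pdiff (a b : ι → Option Bool) : pdist a b = (pdiff a b).card := rfl

theorem mem_pdiff_of_ne {a b : ι → Option Bool} {i : ι} (ha : a i ≠ none) (hb : b i ≠ none)
    (hab : a i ≠ b i) : i ∈ pdiff a b := by
  obtain ⟨x, hx⟩ := Option.ne_none_iff_exists'.1 ha
  obtain ⟨y, hy⟩ := Option.ne_none_iff_exists'.1 hb
  exact Finset.mem_filter.2 ⟨Finset.mem_univ i, x, y, hx, hy, fun h => hab (by rw [hx, hy, h])⟩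

theorem pdist_le_mdiam {S : Multiset (ι → Option Bool)} {a b : ι → Option Bool}
    (ha : a ∈ S) (hb : b ∈ S) : pdist a b ≤ mdiam S :=
  Finset.le_sup (f := fun p => pdist p.1 p.2) (b := (a, b))
    (Finset.mem_product.2 ⟨Multiset.mem_toFinset.2 ha, Multiset.mem_toFinset.2 hb⟩)

end IncompleteVectors

theorem statement_3_general {d : ℕ} (ρ : ℕ)
    (M R : Multiset (Fin d → Option Bool)) (T : Finset (Fin d))
    (hcover : ∀ v ∈ M, ∀ i : Fin d, v i = none → v ∈ R ∨ i ∈ T)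
    (M' : Multiset (Fin d → Option Bool))
    (hM'M : M' ≤ M) (hM'R : ∀ v ∈ M', v ∉ R)
    (hconn : (compatGraph M'.toFinset ρ).Connected) :
    ((Finset.univ.filter fun i : Fin d =>
        ∃ y ∈ M', ∃ y' ∈ M', y i = some true ∧ y' i = some false) \ T).card ≤
      mdiam M' * (Multiset.card M' - 1) := by
  have hdef : ∀ v ∈ M', ∀ i ∉ T, v i ≠ none := fun v hv i hi hvi =>
    (hcover v (Multiset.mem_of_le hM'M hv) i hvi).elim (hM'R v hv) hi
  calc _ ≤ mdiam M' * (Fintype.card M'.toFinset - 1) := by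
        refine hconn.card_le_mul_card_sub_one (fun u v => pdiff u.1 v.1)
          (fun u v _ => pdist_eq_card_pdiff u.1 v.1 ▸
            pdist_le_mdiam (Multiset.mem_toFinset.1 u.2) (Multiset.mem_toFinset.1 v.2))
          (fun i v => v.1 i) ?_ ?_
        · intro i hi
          obtain ⟨⟨y, hy, y', hy', hyt, hyf⟩, -⟩ := by simpa using hi
          exact ⟨⟨y, Multiset.mem_toFinset.2 hy⟩, ⟨y', Multiset.mem_toFinset.2 hy'⟩,
            by simp [hyt, hyf]⟩
        · intro i hi u v _ huv
          have hiT := (Finset.mem_sdiff.1 hi).2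
          exact mem_pdiff_of_ne (hdef _ (Multiset.mem_toFinset.1 u.2) i hiT)
            (hdef _ (Multiset.mem_toFinset.1 v.2) i hiT) huv
    _ ≤ mdiam M' * (Multiset.card M' - 1) := by
        gcongr
        exact (Fintype.card_coe _).trans_le (Multiset.toFinset_card_le M')

theorem statement_3 {d : ℕ} (ρ : ℕ)
    (M R : Multiset (Fin d → Option Bool)) (T : Finset (Fin d))
    (hRM : R ≤ M)
    (hcover : ∀ v ∈ M, ∀ i : Fin d, v i = none → v ∈ R ∨ i ∈ T)
    (M' : Multiset (Fin d → Option Bool))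
    (hM'M : M' ≤ M) (hM'R : ∀ v ∈ M', v ∉ R) (hne : M' ≠ 0)
    (hconn : (compatGraph M'.toFinset ρ).Connected) :
    ((Finset.univ.filter fun i : Fin d =>
        ∃ y ∈ M', ∃ y' ∈ M', y i = some true ∧ y' i = some false) \ T).card ≤
      mdiam M' * (Multiset.card M' - 1) :=
  statement_3_general ρ M R T hcover M' hM'M hM'R hconn
end

section
/- Let k, r ∈ ℕ, let M be a finite multiset of vectors in {0,1,□}^d with cover (R_M, T_M), and let M' ⊆ M \ R_M be nonempty such that the compatibility graph on M' with threshold r is connected. If there exist a completion M* of M (with witnessing bijection φ) and a partition of M* into at most k parts, each of diameter at most r, then γ(M') ≤ 2rk − r + |T_M|. -/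
/-!
Complete every vector of `M'` and place it in a part of the partition. Since the vectors of `M'`
are known outside `T`, their completions are at Hamming distance at most `r` outside `T` whenever
the vectors are adjacent in the compatibility graph, and also whenever they share a part.
Contracting each part to a single vertex turns the connected compatibility graph into a connected
graph on at most `k` parts, so any two parts are joined by a path with at most `k - 1` edges.
Walking along it and alternating moves inside a part with edges of the compatibility graph takes at
most `2k - 1` steps of length `r`; the coordinates in `T` add at most `|T|`.
-/

open scoped Classical

/-- `Mc` is a completion of `M`: a multiset of complete vectors in bijection with `M`,
agreeing with the corresponding vectors on all non-missing entries. -/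
def IsCompletion {ι : Type} (M : Multiset (ι → Option Bool))
    (Mc : Multiset (ι → Bool)) : Prop :=
  Multiset.Rel (fun a c => ∀ i (x : Bool), a i = some x → c i = x) M Mc

/-- The multiset `Mc` of complete vectors can be partitioned into at most `k` parts,
each of diameter at most `r`. -/
def HasDiamPartitionM {ι : Type} [Fintype ι] (Mc : Multiset (ι → Bool)) (k r : ℕ) : Prop :=
  ∃ P : Multiset (Multiset (ι → Bool)), Multiset.card P ≤ k ∧ P.join = Mc ∧
    ∀ p ∈ P, ∀ a ∈ p, ∀ b ∈ p, hammingDist a b ≤ r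

open Finset

namespace SimpleGraph

variable {V W : Type*}

/-- The graph on `W` obtained from `G` by contracting every fibre of `f` to a single vertex. -/
def contract (G : SimpleGraph V) (f : V → W) : SimpleGraph W :=
  fromRel fun a b => ∃ u v, G.Adj u v ∧ f u = a ∧ f v = b

variable {G : SimpleGraph V} {f : V → W}

lemma exists_adj_of_contract_adj {a b : W} (h : (G.contract f).Adj a b) :
    ∃ u v, G.Adj u v ∧ f u = a ∧ f v = b := by
  rcases ((fromRel_adj _ _ _).1 h).2 with ⟨u, v, huv, rfl, rfl⟩ | ⟨u, v, huv, rfl, rfl⟩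
  · exact ⟨u, v, huv, rfl, rfl⟩
  · exact ⟨v, u, huv.symm, rfl, rfl⟩

lemma Reachable.contract {u v : V} (h : G.Reachable u v) :
    (G.contract f).Reachable (f u) (f v) := by
  obtain ⟨w⟩ := h
  induction w with
  | nil => rfl
  | @cons a b _ hab _ ih =>
    refine Reachable.trans ?_ ih
    by_cases hf : f a = f b
    · rw [hf]
    · exact Adj.reachable ((fromRel_adj _ _ _).2 ⟨hf, Or.inl ⟨a, b, hab, rfl, rfl⟩⟩)

variable {D : V → V → ℕ} {r : ℕ}

lemma Walk.le_of_adj_le_of_fiber_le (hD : ∀ x y z, D x z ≤ D x y + D y z)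
    (hadj : ∀ u v, G.Adj u v → D u v ≤ r) (hfib : ∀ u v, f u = f v → D u v ≤ r)
    {a b : W} (w : (G.contract f).Walk a b) {u v : V} (hu : f u = a) (hv : f v = b) :
    D u v ≤ (2 * w.length + 1) * r := by
  induction w generalizing u with
  | nil => simpa using hfib u v (hu.trans hv.symm)
  | cons h w ih =>
    obtain ⟨x, y, hxy, rfl, rfl⟩ := exists_adj_of_contract_adj h
    calc D u v ≤ D u x + (D x y + D y v) := (hD u x v).trans (Nat.add_le_add_left (hD x y v) _)
      _ ≤ r + (r + (2 * w.length + 1) * r) := by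
          gcongr
          exacts [hfib u x hu, hadj x y hxy, ih rfl hv]
      _ = (2 * (Walk.cons h w).length + 1) * r := by
          rw [Walk.length_cons]
          ring

theorem Preconnected.le_of_adj_le_of_fiber_le [Fintype W] (hG : G.Preconnected)
    (hD : ∀ x y z, D x z ≤ D x y + D y z)
    (hadj : ∀ u v, G.Adj u v → D u v ≤ r) (hfib : ∀ u v, f u = f v → D u v ≤ r) (u v : V) :
    D u v ≤ (2 * Fintype.card W - 1) * r := by
  obtain ⟨w⟩ := (hG u v).contract (f := f)
  have hlen : w.toPath.1.length < Fintype.card W := w.toPath.2.length_lt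
  calc D u v ≤ (2 * w.toPath.1.length + 1) * r :=
        w.toPath.1.le_of_adj_le_of_fiber_le hD hadj hfib rfl rfl
    _ ≤ (2 * Fintype.card W - 1) * r := Nat.mul_le_mul_right r (by omega)

end SimpleGraph

section IncompleteVectors

def Extends {ι : Type*} (c : ι → Bool) (a : ι → Option Bool) : Prop :=
  ∀ i x, a i = some x → c i = x

noncomputable def hammingDistOff {ι : Type*} [Fintype ι] (T : Finset ι) (x y : ι → Bool) : ℕ :=
  #{i | i ∉ T ∧ x i ≠ y i}

variable {ι : Type} [Fintype ι] {T : Finset ι}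

lemma hammingDistOff_triangle (x y z : ι → Bool) :
    hammingDistOff T x z ≤ hammingDistOff T x y + hammingDistOff T y z := by
  refine (card_le_card fun i hi => ?_).trans (card_union_le _ _)
  simp only [mem_union, mem_filter, mem_univ, true_and] at hi ⊢
  by_cases h : x i = y i
  · exact Or.inr ⟨hi.1, h ▸ hi.2⟩
  · exact Or.inl ⟨hi.1, h⟩

lemma hammingDistOff_le_hammingDist (x y : ι → Bool) :
    hammingDistOff T x y ≤ hammingDist x y :=
  card_le_card fun _ hi => by
    simp only [mem_filter, mem_univ, true_and] at hi ⊢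
    exact hi.2

lemma pdist_le_hammingDistOff_add_card {a b : ι → Option Bool} {x y : ι → Bool}
    (hx : Extends x a) (hy : Extends y b) : pdist a b ≤ hammingDistOff T x y + #T := by
  refine (card_le_card fun i hi => ?_).trans (card_union_le _ T)
  simp only [mem_union, mem_filter, mem_univ, true_and] at hi ⊢
  obtain ⟨p, q, hp, hq, hpq⟩ := hi
  by_cases hiT : i ∈ T
  · exact Or.inr hiT
  · exact Or.inl ⟨hiT, by rwa [hx i p hp, hy i q hq]⟩

lemma hammingDistOff_le_pdist {a b : ι → Option Bool} {x y : ι → Bool}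
    (ha : ∀ i ∉ T, a i ≠ none) (hb : ∀ i ∉ T, b i ≠ none) (hx : Extends x a) (hy : Extends y b) :
    hammingDistOff T x y ≤ pdist a b := by
  refine card_le_card fun i hi => ?_
  simp only [mem_filter, mem_univ, true_and] at hi ⊢
  obtain ⟨p, hp⟩ := Option.ne_none_iff_exists'.1 (ha i hi.1)
  obtain ⟨q, hq⟩ := Option.ne_none_iff_exists'.1 (hb i hi.1)
  exact ⟨p, q, hp, hq, fun hpq => hi.2 (by rw [hx i p hp, hy i q hq, hpq])⟩

lemma pdist_comm (a b : ι → Option Bool) : pdist a b = pdist b a := by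
  unfold pdist
  congr 1
  ext i
  simp only [mem_filter, mem_univ, true_and]
  exact ⟨fun ⟨p, q, hp, hq, h⟩ => ⟨q, p, hq, hp, h.symm⟩,
    fun ⟨p, q, hp, hq, h⟩ => ⟨q, p, hq, hp, h.symm⟩⟩

lemma pdist_le_of_compatGraph_adj {S : Finset (ι → Option Bool)} {ρ : ℕ} {a b : S}
    (h : (compatGraph S ρ).Adj a b) : pdist a.1 b.1 ≤ ρ := by
  rcases ((SimpleGraph.fromRel_adj _ _ _).1 h).2 with h | h
  · exact h
  · rwa [pdist_comm]

lemma mdiam_le {S : Multiset (ι → Option Bool)} {n : ℕ}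
    (h : ∀ a ∈ S, ∀ b ∈ S, pdist a b ≤ n) : mdiam S ≤ n :=
  Finset.sup_le fun p hp => by
    simp only [mem_product, Multiset.mem_toFinset] at hp
    exact h _ hp.1 _ hp.2

end IncompleteVectors

theorem statement_4_general {d : ℕ} (k r : ℕ)
    (M R : Multiset (Fin d → Option Bool)) (T : Finset (Fin d))
    (hcover : ∀ v ∈ M, ∀ i : Fin d, v i = none → v ∈ R ∨ i ∈ T)
    (M' : Multiset (Fin d → Option Bool))
    (hM'M : M' ≤ M) (hM'R : ∀ v ∈ M', v ∉ R)
    (hconn : (compatGraph M'.toFinset r).Connected)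
    (hsol : ∃ Mc : Multiset (Fin d → Bool), IsCompletion M Mc ∧ HasDiamPartitionM Mc k r) :
    mdiam M' ≤ 2 * r * k - r + T.card := by
  obtain ⟨Mc, hcomp, P, hPk, rfl, hPdiam⟩ := hsol
  have hknown : ∀ v ∈ M', ∀ i ∉ T, v i ≠ none := fun v hv i hi hvi =>
    (hcover v (Multiset.mem_of_le hM'M hv) i hvi).elim (hM'R v hv) hi
  have hpart : ∀ v : M'.toFinset, ∃ p : P.toFinset, ∃ c ∈ p.1, Extends c v.1 := by
    rintro ⟨v, hv⟩
    obtain ⟨c, hc, hcv⟩ := Multiset.exists_mem_of_rel_of_mem hcomp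
      (Multiset.mem_of_le hM'M (Multiset.mem_toFinset.1 hv))
    obtain ⟨p, hp, hcp⟩ := Multiset.mem_join.1 hc
    exact ⟨⟨p, Multiset.mem_toFinset.2 hp⟩, c, hcp, hcv⟩
  choose part c hcpart hc using hpart
  have hM' : ∀ v : M'.toFinset, v.1 ∈ M' := fun v => Multiset.mem_toFinset.1 v.2
  have hbound := hconn.preconnected.le_of_adj_le_of_fiber_le (f := part)
    (D := fun u v => hammingDistOff T (c u) (c v)) (fun _ _ _ => hammingDistOff_triangle _ _ _)
    (fun u v huv =>
      (hammingDistOff_le_pdist (hknown _ (hM' u)) (hknown _ (hM' v)) (hc u) (hc v)).trans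
        (pdist_le_of_compatGraph_adj huv))
    (fun u v huv => (hammingDistOff_le_hammingDist _ _).trans
      (hPdiam _ (Multiset.mem_toFinset.1 (part v).2) _ (huv ▸ hcpart u) _ (hcpart v)))
  have hcard : Fintype.card P.toFinset ≤ k :=
    (Fintype.card_coe _).trans_le ((Multiset.toFinset_card_le P).trans hPk)
  refine mdiam_le fun a ha b hb => ?_
  calc pdist a b ≤ hammingDistOff T (c ⟨a, Multiset.mem_toFinset.2 ha⟩)
        (c ⟨b, Multiset.mem_toFinset.2 hb⟩) + #T := pdist_le_hammingDistOff_add_card (hc _) (hc _)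
    _ ≤ (2 * k - 1) * r + #T := by
        gcongr
        exact (hbound _ _).trans (Nat.mul_le_mul_right r (by omega))
    _ = 2 * r * k - r + T.card := by rw [Nat.sub_mul, one_mul, mul_right_comm]

theorem statement_4 {d : ℕ} (k r : ℕ)
    (M R : Multiset (Fin d → Option Bool)) (T : Finset (Fin d))
    (hRM : R ≤ M)
    (hcover : ∀ v ∈ M, ∀ i : Fin d, v i = none → v ∈ R ∨ i ∈ T)
    (M' : Multiset (Fin d → Option Bool))
    (hM'M : M' ≤ M) (hM'R : ∀ v ∈ M', v ∉ R) (hne : M' ≠ 0)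
    (hconn : (compatGraph M'.toFinset r).Connected)
    (hsol : ∃ Mc : Multiset (Fin d → Bool), IsCompletion M Mc ∧ HasDiamPartitionM Mc k r) :
    mdiam M' ≤ 2 * r * k - r + T.card :=
  statement_4_general k r M R T hcover M' hM'M hM'R hconn hsol
end

section
/- Let k, r ∈ ℕ, let M be a finite multiset of vectors in {0,1,□}^d with cover (R_M, T_M), and let M' ⊆ M \ R_M be nonempty such that the compatibility graph on M' with threshold r is connected. If there exist a completion M* of M (with witnessing bijection φ) and a subset S ⊆ M* with |S| ≤ k such that every a ∈ M* has Hamming distance at most r to some vector in S, then γ(M') ≤ 3rk − r + |T_M|. -/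
open scoped Classical

/- ------------------- auxiliary lemmas ------------------- -/

lemma relExists {α β : Type*} {p : α → β → Prop} {s : Multiset α} {t : Multiset β}
    (h : Multiset.Rel p s t) : ∀ {a}, a ∈ s → ∃ b ∈ t, p a b := by
  induction h with
  | zero => intro a ha; simp at ha
  | @cons a b as bs hab hrel ih =>
    intro x hx
    rcases Multiset.mem_cons.mp hx with rfl | hx
    · exact ⟨b, Multiset.mem_cons_self _ _, hab⟩
    · obtain ⟨y, hy, hpy⟩ := ih hx
      exact ⟨y, Multiset.mem_cons_of_mem hy, hpy⟩

lemma getLastCongr {α : Type*} {l l' : List α} (h : l = l') (h1 : l ≠ []) :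
    l.getLast h1 = l'.getLast (h ▸ h1) := by subst h; rfl

lemma walkGetLast {V : Type*} {G : SimpleGraph V} {u v : V} (w : G.Walk u v) :
    w.support.getLast w.support_ne_nil = v := by
  induction w with
  | nil => simp
  | cons h p ih => exact (List.getLast_cons p.support_ne_nil).trans ih

/-- last occurrence split -/
lemma existsLastOcc {α β : Type*} (g : α → β) :
    ∀ (l : List α) (x : β), x ∈ l.map g →
      ∃ l₁ e l₂, l = l₁ ++ e :: l₂ ∧ g e = x ∧ x ∉ l₂.map g := by
  intro l
  induction l with
  | nil => simp
  | cons h t ih =>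
    intro x hx
    by_cases hxt : x ∈ t.map g
    · obtain ⟨l₁, e, l₂, rfl, hge, hnot⟩ := ih x hxt
      exact ⟨h :: l₁, e, l₂, rfl, hge, hnot⟩
    · have hgh : g h = x := by
        rcases List.mem_map.mp hx with ⟨a, ha, hga⟩
        rcases List.mem_cons.mp ha with rfl | ha
        · exact hga
        · exact absurd (List.mem_map.mpr ⟨a, ha, hga⟩) hxt
      exact ⟨[], h, t, rfl, hgh, hxt⟩

/-- The key shortcutting bound along a chain. -/
lemma walkBound {α β : Type*} (r : ℕ) (E : α → α → Prop)
    (D : β → β → ℕ) (c g : α → β)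
    (hD0 : ∀ x, D x x = 0)
    (hDtri : ∀ x y z, D x z ≤ D x y + D y z)
    (hedge : ∀ a b, E a b → D (c a) (c b) ≤ r)
    (hg1 : ∀ a, D (c a) (g a) ≤ r) (hg2 : ∀ a, D (g a) (c a) ≤ r) :
    ∀ (n : ℕ) (l : List α) (a : α), l.length ≤ n → List.Chain E a l →
      D (c a) (c ((a :: l).getLast (List.cons_ne_nil a l))) ≤
        3 * r * ((a :: l).map g).toFinset.card - r := by
  intro n
  induction n with
  | zero =>
    intro l a hlen _
    have hl : l = [] := List.length_eq_zero_iff.mp (Nat.le_zero.mp hlen)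
    subst hl
    simp [hD0]
  | succ n ih =>
    intro l a hlen hchain
    match l, hchain, hlen with
    | [], _, _ => simp [hD0]
    | b :: l', hchain, hlen =>
      have hab : E a b := (List.chain_cons.mp hchain).1
      have hchain' : List.Chain E b l' := (List.chain_cons.mp hchain).2
      by_cases hmem : g a ∈ (b :: l').map g
      · -- last occurrence of g a
        obtain ⟨l₁, e, l₂, hsplit, hge, hnot⟩ := existsLastOcc g (b :: l') (g a) hmem
        have h2r : D (c a) (c e) ≤ r + r := by
          refine le_trans (hDtri (c a) (g a) (c e)) ?_
          have : D (g a) (c e) ≤ r := by rw [← hge]; exact hg2 e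
          exact Nat.add_le_add (hg1 a) this
        have hgafull : g a ∈ ((a :: b :: l').map g).toFinset := by
          simp
        have hCfull1 : 1 ≤ ((a :: b :: l').map g).toFinset.card :=
          Finset.card_pos.mpr ⟨g a, hgafull⟩
        match l₂, hsplit, hnot with
        | [], hsplit, _ =>
          -- the last vertex is e
          have hlast : (a :: b :: l').getLast (List.cons_ne_nil _ _) = e := by
            have h1 : (a :: b :: l') = (a :: l₁) ++ [e] := by rw [hsplit]; rfl
            rw [getLastCongr h1]
            exact List.getLast_append_of_right_ne_nil (a :: l₁) [e] (by simp)
          rw [hlast]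
          have h3 : 3 * r ≤ 3 * r * ((a :: b :: l').map g).toFinset.card := by
            calc 3 * r = 3 * r * 1 := (mul_one _).symm
              _ ≤ _ := Nat.mul_le_mul_left (3*r) hCfull1
          refine le_trans h2r (le_trans (by omega : r + r ≤ 3 * r - r) ?_)
          exact Nat.sub_le_sub_right h3 r
        | b₂ :: l₃, hsplit, hnot =>
          -- chain on the suffix
          have hch2 : List.Chain E e (b₂ :: l₃) := by
            have := hchain
            rw [show (b :: l') = l₁ ++ e :: (b₂ :: l₃) from hsplit] at this
            exact (List.isChain_cons_split.mp this).2
          have heb₂ : E e b₂ := (List.chain_cons.mp hch2).1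
          have hch3 : List.Chain E b₂ l₃ := (List.chain_cons.mp hch2).2
          have hlen3 : l₃.length ≤ n := by
            have h := congrArg List.length hsplit
            simp only [List.length_cons, List.length_append] at h hlen
            omega
          have IH := ih l₃ b₂ hlen3 hch3
          -- identify last elements
          have hlast : (a :: b :: l').getLast (List.cons_ne_nil _ _)
              = (b₂ :: l₃).getLast (List.cons_ne_nil _ _) := by
            have h1 : (a :: b :: l') = (a :: l₁ ++ [e]) ++ (b₂ :: l₃) := by
              rw [hsplit]; simp
            rw [getLastCongr h1]
            exact List.getLast_append_of_right_ne_nil _ _ (by simp)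
          -- center counting
          have hsub : ((b₂ :: l₃).map g).toFinset ⊆
              ((a :: b :: l').map g).toFinset \ {g a} := by
            intro x hx
            simp only [List.mem_toFinset, List.mem_map] at hx
            obtain ⟨y, hy, rfl⟩ := hx
            rw [Finset.mem_sdiff]
            have hymem : y ∈ a :: b :: l' := by
              rw [hsplit]
              exact List.mem_cons_of_mem a
                (List.mem_append_right _ (List.mem_cons_of_mem _ hy))
            constructor
            · simp only [List.mem_toFinset, List.mem_map]
              exact ⟨y, hymem, rfl⟩
            · simp only [Finset.mem_singleton]
              intro hgy
              exact hnot (by rw [← hgy]; exact List.mem_map.mpr ⟨y, hy, rfl⟩)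
          have hc3le : ((b₂ :: l₃).map g).toFinset.card + 1 ≤
              ((a :: b :: l').map g).toFinset.card := by
            have h1 := Finset.card_le_card hsub
            have h2 : (((a :: b :: l').map g).toFinset \ {g a}).card =
                ((a :: b :: l').map g).toFinset.card - 1 := by
              rw [Finset.card_sdiff_of_subset (Finset.singleton_subset_iff.mpr hgafull)]
              simp
            omega
          have hc31 : 1 ≤ ((b₂ :: l₃).map g).toFinset.card :=
            Finset.card_pos.mpr ⟨g b₂, by simp⟩
          -- assemble
          have main : D (c a) (c ((b₂ :: l₃).getLast (List.cons_ne_nil _ _))) ≤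
              (r + r) + (r + (3 * r * ((b₂ :: l₃).map g).toFinset.card - r)) := by
            refine le_trans (hDtri _ (c e) _) ?_
            refine Nat.add_le_add h2r ?_
            refine le_trans (hDtri _ (c b₂) _) ?_
            exact Nat.add_le_add (hedge _ _ heb₂) IH
          rw [hlast]
          have hmul : 3 * r * (((b₂ :: l₃).map g).toFinset.card + 1) ≤
              3 * r * ((a :: b :: l').map g).toFinset.card :=
            Nat.mul_le_mul_left (3*r) hc3le
          have hexp : 3 * r * (((b₂ :: l₃).map g).toFinset.card + 1) =
              3 * r * ((b₂ :: l₃).map g).toFinset.card + 3 * r := by ring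
          have hrle : 3 * r * 1 ≤ 3 * r * ((b₂ :: l₃).map g).toFinset.card :=
            Nat.mul_le_mul_left (3*r) hc31
          omega
      · -- g a is a new center
        have IH := ih l' b (by simpa using hlen) hchain'
        have hlast : (a :: b :: l').getLast (List.cons_ne_nil _ _)
            = (b :: l').getLast (List.cons_ne_nil _ _) := List.getLast_cons _
        rw [hlast]
        have main : D (c a) (c ((b :: l').getLast (List.cons_ne_nil _ _))) ≤
            r + (3 * r * ((b :: l').map g).toFinset.card - r) := by
          refine le_trans (hDtri _ (c b) _) ?_
          exact Nat.add_le_add (hedge _ _ hab) IH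
        have hins : ((a :: b :: l').map g).toFinset =
            insert (g a) ((b :: l').map g).toFinset := by
          simp [List.map_cons, List.toFinset_cons]
        have hcard : ((a :: b :: l').map g).toFinset.card =
            ((b :: l').map g).toFinset.card + 1 := by
          rw [hins, Finset.card_insert_of_notMem (by simpa using hmem)]
        have hc1 : 1 ≤ ((b :: l').map g).toFinset.card :=
          Finset.card_pos.mpr ⟨g b, by simp⟩
        have hrle : 3 * r * 1 ≤ 3 * r * ((b :: l').map g).toFinset.card :=
          Nat.mul_le_mul_left (3*r) hc1
        have hexp : 3 * r * (((b :: l').map g).toFinset.card + 1) =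
            3 * r * ((b :: l').map g).toFinset.card + 3 * r := by ring
        rw [hcard]
        omega

theorem statement_5 {d : ℕ} (k r : ℕ)
    (M R : Multiset (Fin d → Option Bool)) (T : Finset (Fin d))
    (hRM : R ≤ M)
    (hcover : ∀ v ∈ M, ∀ i : Fin d, v i = none → v ∈ R ∨ i ∈ T)
    (M' : Multiset (Fin d → Option Bool))
    (hM'M : M' ≤ M) (hM'R : ∀ v ∈ M', v ∉ R) (hne : M' ≠ 0)
    (hconn : (compatGraph M'.toFinset r).Connected)
    (hsol : ∃ Mc : Multiset (Fin d → Bool), IsCompletion M Mc ∧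
      ∃ S : Multiset (Fin d → Bool), S ≤ Mc ∧ Multiset.card S ≤ k ∧
        ∀ a ∈ Mc, ∃ s ∈ S, hammingDist s a ≤ r) :
    mdiam M' ≤ 3 * r * k - r + T.card := by
  classical
  obtain ⟨Mc, hcomp, S, hSMc, hSk, hcov⟩ := hsol
  -- choose a completion for each vector of M
  have hex1 : ∀ a ∈ M, ∃ cc, cc ∈ Mc ∧ ∀ i (x : Bool), a i = some x → cc i = x := by
    intro a ha
    obtain ⟨cc, h1, h2⟩ := relExists hcomp ha
    exact ⟨cc, h1, h2⟩
  set f : (Fin d → Option Bool) → (Fin d → Bool) := fun a =>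
    if h : ∃ cc, cc ∈ Mc ∧ ∀ i (x : Bool), a i = some x → cc i = x
    then h.choose else fun _ => false with hf_def
  have hf : ∀ a ∈ M, f a ∈ Mc ∧ ∀ i (x : Bool), a i = some x → f a i = x := by
    intro a ha
    have h := hex1 a ha
    simp only [hf_def, dif_pos h]
    exact h.choose_spec
  -- choose a center for each complete vector
  set g : (Fin d → Bool) → (Fin d → Bool) := fun cc =>
    if h : ∃ s, s ∈ S ∧ hammingDist s cc ≤ r then h.choose else fun _ => false
    with hg_def
  have hg : ∀ cc ∈ Mc, g cc ∈ S ∧ hammingDist (g cc) cc ≤ r := by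
    intro cc hcc
    have h : ∃ s, s ∈ S ∧ hammingDist s cc ≤ r := by
      obtain ⟨s, h1, h2⟩ := hcov cc hcc
      exact ⟨s, h1, h2⟩
    simp only [hg_def, dif_pos h]
    exact h.choose_spec
  -- the outside-T distance
  set D : (Fin d → Bool) → (Fin d → Bool) → ℕ := fun u v =>
    (Finset.univ.filter fun i => i ∉ T ∧ u i ≠ v i).card with hD_def
  have hD0 : ∀ x, D x x = 0 := by
    intro x; simp [hD_def]
  have hDtri : ∀ x y z, D x z ≤ D x y + D y z := by
    intro x y z
    refine le_trans (Finset.card_le_card ?_) (Finset.card_union_le _ _)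
    intro i hi
    simp only [Finset.mem_filter, Finset.mem_union, Finset.mem_univ, true_and] at hi ⊢
    by_cases h : x i = y i
    · exact Or.inr ⟨hi.1, by rw [← h]; exact hi.2⟩
    · exact Or.inl ⟨hi.1, h⟩
  -- membership facts for M'
  have hmemM : ∀ v ∈ M', v ∈ M := fun v hv => Multiset.mem_of_le hM'M hv
  have hknown : ∀ v ∈ M', ∀ i : Fin d, i ∉ T → ∃ x : Bool, v i = some x := by
    intro v hv i hiT
    cases hvi : v i with
    | none =>
      rcases hcover v (hmemM v hv) i hvi with h | h
      · exact absurd h (hM'R v hv)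
      · exact absurd h hiT
    | some x => exact ⟨x, rfl⟩
  -- D bounded by hammingDist
  have hDham : ∀ u v : Fin d → Bool, D u v ≤ hammingDist u v := by
    intro u v
    refine Finset.card_le_card ?_
    intro i hi
    simp only [Finset.mem_filter, Finset.mem_univ, true_and, hammingDist] at hi ⊢
    exact hi.2
  -- edge bound
  have hedge : ∀ a b, a ∈ M' → b ∈ M' → pdist a b ≤ r → D (f a) (f b) ≤ r := by
    intro a b ha hb hpd
    refine le_trans ?_ hpd
    refine Finset.card_le_card ?_
    intro i hi
    simp only [Finset.mem_filter, Finset.mem_univ, true_and] at hi ⊢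
    obtain ⟨hiT, hne'⟩ := hi
    obtain ⟨x, hx⟩ := hknown a ha i hiT
    obtain ⟨y, hy⟩ := hknown b hb i hiT
    refine ⟨x, y, hx, hy, ?_⟩
    intro hxy
    apply hne'
    rw [(hf a (hmemM a ha)).2 i x hx, (hf b (hmemM b hb)).2 i y hy, hxy]
  -- pdist bounded by D plus T
  have hpdD : ∀ a b, a ∈ M' → b ∈ M' → pdist a b ≤ T.card + D (f a) (f b) := by
    intro a b ha hb
    unfold pdist
    refine le_trans (Finset.card_le_card (show _ ⊆
        T ∪ (Finset.univ.filter fun i => i ∉ T ∧ f a i ≠ f b i) from ?_))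
      (le_trans (Finset.card_union_le _ _) (le_refl _))
    intro i hi
    simp only [Finset.mem_filter, Finset.mem_univ, true_and] at hi
    obtain ⟨x, y, hx, hy, hxy⟩ := hi
    rw [Finset.mem_union]
    by_cases hiT : i ∈ T
    · exact Or.inl hiT
    · refine Or.inr ?_
      simp only [Finset.mem_filter, Finset.mem_univ, true_and]
      refine ⟨hiT, ?_⟩
      rw [(hf a (hmemM a ha)).2 i x hx, (hf b (hmemM b hb)).2 i y hy]
      exact fun h => hxy (by exact_mod_cast h)
  -- now bound the diameter
  rw [mdiam]
  refine Finset.sup_le ?_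
  rintro ⟨a, b⟩ hp
  rw [Finset.mem_product] at hp
  obtain ⟨ha, hb⟩ := hp
  have haM' : a ∈ M' := Multiset.mem_toFinset.mp ha
  have hbM' : b ∈ M' := Multiset.mem_toFinset.mp hb
  -- vertices of the compatibility graph
  set V := {x // x ∈ M'.toFinset}
  set G := compatGraph M'.toFinset r with hG_def
  have hreach : G.Reachable ⟨a, ha⟩ ⟨b, hb⟩ := hconn.preconnected _ _
  obtain ⟨w⟩ := hreach
  set l := w.support.tail with hl_def
  have hchain : List.Chain G.Adj ⟨a, ha⟩ l := by
    have h := w.isChain_adj_support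
    rw [w.support_eq_cons] at h
    exact h
  have hlastw : ((⟨a, ha⟩ : V) :: l).getLast (List.cons_ne_nil _ _) = ⟨b, hb⟩ := by
    have h1 : ((⟨a, ha⟩ : V) :: l) = w.support := (w.support_eq_cons).symm
    rw [getLastCongr h1]
    exact walkGetLast w
  -- pdist is symmetric
  have hpdsymm : ∀ u v : Fin d → Option Bool, pdist u v = pdist v u := by
    intro u v
    unfold pdist
    congr 1
    apply Finset.filter_congr
    intro i _
    constructor
    · rintro ⟨x, y, h1, h2, h3⟩; exact ⟨y, x, h2, h1, h3.symm⟩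
    · rintro ⟨x, y, h1, h2, h3⟩; exact ⟨y, x, h2, h1, h3.symm⟩
  -- apply the walk bound
  have hedgeV : ∀ u v : V, G.Adj u v → D (f u.1) (f v.1) ≤ r := by
    intro u v huv
    rw [hG_def, compatGraph] at huv
    rw [SimpleGraph.fromRel_adj] at huv
    have hu : u.1 ∈ M' := Multiset.mem_toFinset.mp u.2
    have hv : v.1 ∈ M' := Multiset.mem_toFinset.mp v.2
    rcases huv.2 with h | h
    · exact hedge _ _ hu hv h
    · exact hedge _ _ hu hv (by rw [hpdsymm]; exact h)
  have hg1V : ∀ u : V, D (f u.1) (g (f u.1)) ≤ r := by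
    intro u
    have hu : f u.1 ∈ Mc := (hf u.1 (hmemM u.1 (Multiset.mem_toFinset.mp u.2))).1
    refine le_trans (hDham _ _) ?_
    rw [hammingDist_comm]
    exact (hg _ hu).2
  have hg2V : ∀ u : V, D (g (f u.1)) (f u.1) ≤ r := by
    intro u
    have hu : f u.1 ∈ Mc := (hf u.1 (hmemM u.1 (Multiset.mem_toFinset.mp u.2))).1
    exact le_trans (hDham _ _) (hg _ hu).2
  have hbound := walkBound r G.Adj D (fun u : V => f u.1) (fun u : V => g (f u.1))
    hD0 hDtri hedgeV hg1V hg2V l.length l ⟨a, ha⟩ (le_refl _) hchain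
  rw [hlastw] at hbound
  -- number of centers is at most k
  have hDfin : D (f a) (f b) ≤ 3 * r * k - r := by
    refine le_trans hbound (Nat.sub_le_sub_right (Nat.mul_le_mul_left (3*r) ?_) r)
    refine le_trans (le_trans (Finset.card_le_card ?_) S.toFinset_card_le) hSk
    intro x hx
    simp only [List.mem_toFinset, List.mem_map] at hx
    obtain ⟨u, _, rfl⟩ := hx
    have hu : f u.1 ∈ Mc := (hf u.1 (hmemM u.1 (Multiset.mem_toFinset.mp u.2))).1
    exact Multiset.mem_toFinset.mpr (hg _ hu).1
  calc pdist a b ≤ T.card + D (f a) (f b) := hpdD a b haM' hbM'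
    _ ≤ T.card + (3 * r * k - r) := Nat.add_le_add_left hDfin _
    _ = 3 * r * k - r + T.card := by ring
end

section
/- Let k, r ∈ ℕ and let M be a finite multiset of vectors in {0,1,□}^d with cover (R_M, T_M). Then there is a subset M' of M with R_M ⊆ M' satisfying: (P1) for every v ∈ M \ R_M, the number of vectors x ∈ M' \ R_M with δ(v,x) ≤ r is at most 2^{|T_M|}·(Σ_{t=1}^{r} t!·(k(r+t)+2)^t); and (P2) for every set S ⊆ {0,1}^d with |S| ≤ k such that every m ∈ M is within distance r of some vector in S, it holds that max_{y ∈ M} δ(S,y) = max_{y ∈ M'} δ(S,y). -/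
open scoped Classical

/-- A complete vector viewed as an incomplete vector with no missing entries. -/
def toPartial {ι : Type} (c : ι → Bool) : ι → Option Bool := fun i => some (c i)

/-- δ(S,a): the minimum δ-distance from the incomplete vector `a` to a complete
vector in `S`. -/
noncomputable def dminS {ι : Type} [Fintype ι] (S : Finset (ι → Bool))
    (a : ι → Option Bool) : ℕ :=
  sInf ((fun s => pdist (toPartial s) a) '' (S : Set (ι → Bool)))

-- pdist from a complete vector: description as filter
lemma pdist_toPartial {ι : Type} [Fintype ι] (c : ι → Bool) (z : ι → Option Bool) :
    pdist (toPartial c) z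
      = (Finset.univ.filter fun i => z i ≠ none ∧ z i ≠ some (c i)).card := by
  unfold pdist
  congr 1
  apply Finset.filter_congr
  intro i _
  constructor
  · rintro ⟨x, y, hx, hy, hxy⟩
    have hcx : c i = x := by simpa [toPartial] using hx
    refine ⟨by simp [hy], ?_⟩
    rw [hy, hcx]
    exact fun h => hxy (Option.some_inj.1 h).symm
  · rintro ⟨h1, h2⟩
    obtain ⟨y, hy⟩ := Option.ne_none_iff_exists'.1 h1
    exact ⟨c i, y, rfl, hy, fun h => h2 (by rw [hy, h])⟩

lemma dminS_le {ι : Type} [Fintype ι] {S : Finset (ι → Bool)} {s : ι → Bool}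
    (hs : s ∈ S) (a : ι → Option Bool) : dminS S a ≤ pdist (toPartial s) a :=
  Nat.sInf_le ⟨s, by simpa using hs, rfl⟩

lemma dminS_attained {ι : Type} [Fintype ι] {S : Finset (ι → Bool)} (hS : S.Nonempty)
    (a : ι → Option Bool) : ∃ s ∈ S, pdist (toPartial s) a = dminS S a := by
  have hne : ((fun s => pdist (toPartial s) a) '' (S : Set (ι → Bool))).Nonempty := by
    obtain ⟨s, hs⟩ := hS
    exact ⟨_, ⟨s, by simpa using hs, rfl⟩⟩
  obtain ⟨s, hs, h⟩ := Nat.sInf_mem hne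
  exact ⟨s, by simpa using hs, h⟩

lemma dminS_empty {ι : Type} [Fintype ι] (a : ι → Option Bool) :
    dminS (∅ : Finset (ι → Bool)) a = 0 := by
  unfold dminS
  simp

lemma S_nonempty_of_dminS_pos {ι : Type} [Fintype ι] {S : Finset (ι → Bool)}
    {a : ι → Option Bool} (h : 1 ≤ dminS S a) : S.Nonempty := by
  rcases S.eq_empty_or_nonempty with rfl | hne
  · rw [dminS_empty] at h; omega
  · exact hne

lemma sup_attained (s : Multiset ℕ) (h : 0 < s.sup) : ∃ a ∈ s, s.sup = a := by
  induction s using Multiset.induction_on with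
  | empty => simp at h
  | cons a s ih =>
    rw [Multiset.sup_cons] at h ⊢
    rcases le_total (s.sup) a with hle | hle
    · exact ⟨a, Multiset.mem_cons_self _ _, sup_eq_left.2 hle⟩
    · have h0 : 0 < s.sup := lt_of_lt_of_le h (by simp [sup_eq_right.2 hle])
      obtain ⟨b, hb, hb2⟩ := ih h0
      exact ⟨b, Multiset.mem_cons_of_mem hb, by rw [sup_eq_right.2 hle, hb2]⟩

lemma sup_map_mono {α : Type*} {A B : Multiset α} (f : α → ℕ) (h : A ≤ B) :
    (A.map f).sup ≤ (B.map f).sup := by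
  apply Multiset.sup_le.2
  intro b hb
  obtain ⟨a, ha, rfl⟩ := Multiset.mem_map.1 hb
  exact Multiset.le_sup (Multiset.mem_map_of_mem f (Multiset.mem_of_le h ha))

lemma card_symmDiff_of_disjoint {α : Type*} [DecidableEq α] {A B : Finset α}
    (h : Disjoint A B) : (symmDiff A B).card = A.card + B.card := by
  rw [show symmDiff A B = (A \ B) ∪ (B \ A) from rfl, Finset.card_union_of_disjoint, Finset.sdiff_eq_self_of_disjoint h,
    Finset.sdiff_eq_self_of_disjoint h.symm]
  exact disjoint_sdiff_sdiff

lemma card_symmDiff_le {α : Type*} [DecidableEq α] (A B : Finset α) :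
    (symmDiff A B).card ≤ A.card + B.card := by
  rw [show symmDiff A B = (A \ B) ∪ (B \ A) from rfl]
  calc (A \ B ∪ B \ A).card ≤ (A \ B).card + (B \ A).card := Finset.card_union_le _ _
    _ ≤ A.card + B.card := Nat.add_le_add (Finset.card_le_card (Finset.sdiff_subset))
        (Finset.card_le_card (Finset.sdiff_subset))

lemma card_le_symmDiff_add {α : Type*} [DecidableEq α] (A B : Finset α) :
    A.card ≤ (symmDiff A B).card + B.card := by
  have hsub : A ⊆ (symmDiff A B) ∪ B := by
    intro a ha
    rw [Finset.mem_union, Finset.mem_symmDiff]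
    by_cases hb : a ∈ B
    · exact Or.inr hb
    · exact Or.inl (Or.inl ⟨ha, hb⟩)
  calc A.card ≤ ((symmDiff A B) ∪ B).card := Finset.card_le_card hsub
    _ ≤ _ := Finset.card_union_le _ _

lemma symmDiff_sub_eq {α : Type*} [DecidableEq α] {K F : Finset α} (h : K ⊆ F) :
    symmDiff K F = F \ K := by
  rw [show symmDiff K F = (K \ F) ∪ (F \ K) from rfl, Finset.sdiff_eq_empty_iff_subset.2 h, Finset.empty_union]

theorem my_sunflower {α : Type*} [DecidableEq α] :
    ∀ (m : ℕ) (w : ℕ) (F : Finset (Finset α)), (∀ A ∈ F, A.card = m) →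
    Nat.factorial m * w ^ m < F.card →
    ∃ P ⊆ F, ∃ K : Finset α, w + 1 ≤ P.card ∧
      ∀ A ∈ P, ∀ B ∈ P, A ≠ B → A ∩ B = K := by
  intro m
  induction m with
  | zero =>
    intro w F hcard hbig
    exfalso
    have hsub : F ⊆ {∅} := by
      intro A hA
      simp [Finset.card_eq_zero.1 (hcard A hA)]
    have h1 := Finset.card_le_card hsub
    simp only [Finset.card_singleton] at h1
    simp only [Nat.factorial_zero, pow_zero, mul_one] at hbig
    omega
  | succ m ih =>
    intro w F hcard hbig
    have hne : (F.powerset.filter (fun D => ∀ A ∈ D, ∀ B ∈ D, A ≠ B → A ∩ B = ∅)).Nonempty := by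
      refine ⟨∅, ?_⟩
      simp
    obtain ⟨D, hDmem, hDmax⟩ := Finset.exists_max_image _ Finset.card hne
    rw [Finset.mem_filter, Finset.mem_powerset] at hDmem
    obtain ⟨hDF, hDdisj⟩ := hDmem
    by_cases hw : w + 1 ≤ D.card
    · exact ⟨D, hDF, ∅, hw, hDdisj⟩
    push_neg at hw
    have hUcard : (D.biUnion id).card ≤ w * (m + 1) := by
      calc (D.biUnion id).card ≤ ∑ A ∈ D, (id A).card := Finset.card_biUnion_le
        _ ≤ ∑ _A ∈ D, (m+1) := Finset.sum_le_sum (fun A hA => le_of_eq (hcard A (hDF hA)))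
        _ = D.card * (m+1) := by rw [Finset.sum_const, smul_eq_mul]
        _ ≤ w * (m+1) := Nat.mul_le_mul_right _ (by omega)
    have hmeet : ∀ A ∈ F, ∃ x ∈ D.biUnion id, x ∈ A := by
      intro A hA
      by_contra hcon
      push_neg at hcon
      have hAD : A ∉ D := by
        intro hAD
        obtain ⟨x, hx⟩ := Finset.card_pos.1 (show 0 < A.card by rw [hcard A hA]; omega)
        exact hcon x (Finset.mem_biUnion.2 ⟨A, hAD, hx⟩) hx
      have hAdisj : ∀ X ∈ D, A ∩ X = ∅ := by
        intro X hX
        apply Finset.eq_empty_of_forall_notMem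
        intro x hx
        rw [Finset.mem_inter] at hx
        exact hcon x (Finset.mem_biUnion.2 ⟨X, hX, hx.2⟩) hx.1
      have hins : insert A D ∈ F.powerset.filter
          (fun D => ∀ A ∈ D, ∀ B ∈ D, A ≠ B → A ∩ B = ∅) := by
        rw [Finset.mem_filter, Finset.mem_powerset]
        refine ⟨Finset.insert_subset hA hDF, ?_⟩
        intro X hX Y hY hXY
        rcases Finset.mem_insert.1 hX with rfl | hX'
        · rcases Finset.mem_insert.1 hY with rfl | hY'
          · exact absurd rfl hXY
          · exact hAdisj Y hY'
        · rcases Finset.mem_insert.1 hY with rfl | hY'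
          · rw [Finset.inter_comm]; exact hAdisj X hX'
          · exact hDdisj X hX' Y hY' hXY
      have := hDmax _ hins
      rw [Finset.card_insert_of_notMem hAD] at this
      omega
    have hx : ∃ x ∈ D.biUnion id, Nat.factorial m * w ^ m < (F.filter (fun A => x ∈ A)).card := by
      by_contra hcon
      push_neg at hcon
      have hcover : F ⊆ (D.biUnion id).biUnion (fun x => F.filter (fun A => x ∈ A)) := by
        intro A hA
        obtain ⟨x, hxU, hxA⟩ := hmeet A hA
        exact Finset.mem_biUnion.2 ⟨x, hxU, Finset.mem_filter.2 ⟨hA, hxA⟩⟩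
      have h1 : F.card ≤ ∑ x ∈ D.biUnion id, (F.filter (fun A => x ∈ A)).card :=
        le_trans (Finset.card_le_card hcover) Finset.card_biUnion_le
      have h2 : ∑ x ∈ D.biUnion id, (F.filter (fun A => x ∈ A)).card
          ≤ (D.biUnion id).card * (Nat.factorial m * w ^ m) := by
        calc ∑ x ∈ D.biUnion id, (F.filter (fun A => x ∈ A)).card
            ≤ ∑ _x ∈ D.biUnion id, Nat.factorial m * w ^ m :=
              Finset.sum_le_sum (fun x hxU => hcon x hxU)
          _ = (D.biUnion id).card * (Nat.factorial m * w ^ m) := by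
              rw [Finset.sum_const, smul_eq_mul]
      have h3 : (D.biUnion id).card * (Nat.factorial m * w ^ m)
          ≤ (w * (m+1)) * (Nat.factorial m * w ^ m) := Nat.mul_le_mul_right _ hUcard
      have h4 : (w * (m+1)) * (Nat.factorial m * w ^ m) = Nat.factorial (m+1) * w ^ (m+1) := by
        rw [Nat.factorial_succ]; ring
      omega
    obtain ⟨x, _hxU, hxbig⟩ := hx
    have hGcard : (((F.filter (fun A => x ∈ A))).image (fun A => A.erase x)).card
        = (F.filter (fun A => x ∈ A)).card := by
      apply Finset.card_image_of_injOn
      intro A hA B hB hAB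
      have hA' := (Finset.mem_filter.1 hA).2
      have hB' := (Finset.mem_filter.1 hB).2
      have : insert x (A.erase x) = insert x (B.erase x) := by simp only at hAB; rw [hAB]
      rwa [Finset.insert_erase hA', Finset.insert_erase hB'] at this
    have hGunif : ∀ A ∈ ((F.filter (fun A => x ∈ A))).image (fun A => A.erase x),
        A.card = m := by
      intro A hA
      obtain ⟨B, hB, rfl⟩ := Finset.mem_image.1 hA
      rw [Finset.card_erase_of_mem (Finset.mem_filter.1 hB).2,
        hcard B (Finset.mem_filter.1 hB).1]
      rfl
    have hbig2 : Nat.factorial m * w ^ m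
        < (((F.filter (fun A => x ∈ A))).image (fun A => A.erase x)).card := by
      rw [hGcard]; exact hxbig
    obtain ⟨P', hP'G, K', hP'card, hP'inter⟩ := ih w _ hGunif hbig2
    have hxP' : ∀ A ∈ P', x ∉ A := by
      intro A hA
      obtain ⟨C, _hC, rfl⟩ := Finset.mem_image.1 (hP'G hA)
      exact Finset.notMem_erase x C
    refine ⟨P'.image (insert x), ?_, insert x K', ?_, ?_⟩
    · intro A hA
      obtain ⟨B, hB, rfl⟩ := Finset.mem_image.1 hA
      obtain ⟨C, hC, rfl⟩ := Finset.mem_image.1 (hP'G hB)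
      rw [Finset.insert_erase (Finset.mem_filter.1 hC).2]
      exact (Finset.mem_filter.1 hC).1
    · rw [Finset.card_image_of_injOn]
      · exact hP'card
      · intro A hA B hB hAB
        have h1 : (insert x A).erase x = (insert x B).erase x := by rw [hAB]
        rwa [Finset.erase_insert (hxP' A hA), Finset.erase_insert (hxP' B hB)] at h1
    · intro A hA B hB hAB
      obtain ⟨A', hA', rfl⟩ := Finset.mem_image.1 hA
      obtain ⟨B', hB', rfl⟩ := Finset.mem_image.1 hB
      have hA'B' : A' ≠ B' := fun h => hAB (by rw [h])
      have h := hP'inter A' hA' B' hB' hA'B'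
      ext y
      simp only [Finset.mem_inter, Finset.mem_insert, ← h]
      tauto

section Core
variable {d : ℕ}

/-- difference set of `z` from the complete vector `s`. -/
noncomputable def Fs (s : Fin d → Bool) (z : Fin d → Option Bool) : Finset (Fin d) :=
  Finset.univ.filter fun i => z i ≠ none ∧ z i ≠ some (s i)

lemma pdist_eq_Fs (s : Fin d → Bool) (z : Fin d → Option Bool) :
    pdist (toPartial s) z = (Fs s z).card := pdist_toPartial s z

/-- reconstruction of `z` from its pattern `D` and difference set from `s`. -/
lemma recon {s : Fin d → Bool} {D : Finset (Fin d)} {z : Fin d → Option Bool}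
    (hD : ∀ i, z i = none ↔ i ∈ D) :
    z = fun i => if i ∈ D then none else some (if i ∈ Fs s z then !(s i) else s i) := by
  funext i
  by_cases hiD : i ∈ D
  · simp [hiD, (hD i).2 hiD]
  · have hnone : z i ≠ none := fun h => hiD ((hD i).1 h)
    obtain ⟨b, hb⟩ := Option.ne_none_iff_exists'.1 hnone
    by_cases hiF : i ∈ Fs s z
    · have hneq : z i ≠ some (s i) := ((Finset.mem_filter.1 hiF).2).2
      have hbs : b ≠ s i := fun h => hneq (by rw [hb, h])
      have : b = !(s i) := by
        cases b <;> cases hsi : s i <;> simp_all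
      simp [hiD, hiF, hb, this]
    · have : ¬ (z i ≠ none ∧ z i ≠ some (s i)) := by
        intro hcon
        exact hiF (Finset.mem_filter.2 ⟨Finset.mem_univ i, hcon⟩)
      push_neg at this
      simp [hiD, hiF, this hnone]

/-- key identity : the distance from any complete vector `s'` to `z` is the size of a
symmetric difference. -/
lemma pdist_symmDiff {s s' : Fin d → Bool} {D : Finset (Fin d)} {z : Fin d → Option Bool}
    (hD : ∀ i, z i = none ↔ i ∈ D) :
    pdist (toPartial s') z
      = (symmDiff (Finset.univ.filter fun i => i ∉ D ∧ s' i ≠ s i) (Fs s z)).card := by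
  rw [pdist_toPartial]
  congr 1
  ext i
  simp only [Finset.mem_filter, Finset.mem_univ, true_and, Finset.mem_symmDiff]
  by_cases hiD : i ∈ D
  · have : z i = none := (hD i).2 hiD
    simp only [this, Fs, Finset.mem_filter, Finset.mem_univ, true_and]
    simp [hiD]
  · have hnone : z i ≠ none := fun h => hiD ((hD i).1 h)
    obtain ⟨b, hb⟩ := Option.ne_none_iff_exists'.1 hnone
    have hFs : i ∈ Fs s z ↔ b ≠ s i := by
      simp only [Fs, Finset.mem_filter, Finset.mem_univ, true_and, hb]
      constructor
      · rintro ⟨-, h2⟩ h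
        exact h2 (by rw [h])
      · intro h
        exact ⟨by simp, fun hcon => h (Option.some_inj.1 hcon)⟩
    simp only [hb, hFs, hiD, not_false_iff, true_and]
    have key : ∀ (x y c : Bool), (some c ≠ none ∧ some c ≠ some y) ↔
        ((y ≠ x ∧ ¬(c ≠ x)) ∨ ((c ≠ x) ∧ ¬(y ≠ x))) := by decide
    exact key (s i) (s' i) b


def farith (k r : ℕ) (m : ℕ) : ℕ := Nat.factorial m * (k * (r + m - 1) + 1) ^ m
def garith (k r : ℕ) (t : ℕ) : ℕ := Nat.factorial t * (k * (r + t) + 2) ^ t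

lemma farith_zero (k r : ℕ) : farith k r 0 = 1 := by simp [farith]

lemma fiber_bound (k r m : ℕ) (Y W : Finset (Fin d → Option Bool)) (hWY : W ⊆ Y)
    (hsys : ∀ y ∈ Y, ∃ S : Finset (Fin d → Bool), S.card ≤ k ∧
      1 ≤ dminS S y ∧ dminS S y ≤ r ∧ ∀ z ∈ Y, z ≠ y → dminS S z < dminS S y)
    (s : Fin d → Bool) (D : Finset (Fin d))
    (hz : ∀ z ∈ W, (∀ i, z i = none ↔ i ∈ D) ∧ (Fs s z).card = m) :
    W.card ≤ farith k r m := by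
  have hinj : ∀ z ∈ W, ∀ z' ∈ W, Fs s z = Fs s z' → z = z' := by
    intro z hzW z' hz'W hF
    rw [recon (hz z hzW).1, recon (hz z' hz'W).1, hF]
  by_cases hm : m = 0
  · subst hm
    rw [farith_zero]
    apply Finset.card_le_one.2
    intro z hzW z' hz'W
    apply hinj z hzW z' hz'W
    have h1 : Fs s z = ∅ := Finset.card_eq_zero.1 (hz z hzW).2
    have h2 : Fs s z' = ∅ := Finset.card_eq_zero.1 (hz z' hz'W).2
    rw [h1, h2]
  rw [show farith k r m = Nat.factorial m * (k * (r + m - 1) + 1) ^ m from rfl]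
  by_contra hbig
  push_neg at hbig
  set w := k * (r + m - 1) + 1 with hw
  -- image family
  have hcardim : (W.image (Fs s)).card = W.card :=
    Finset.card_image_of_injOn (fun z hz1 z' hz2 h => hinj z hz1 z' hz2 h)
  have hunif : ∀ A ∈ W.image (Fs s), A.card = m := by
    intro A hA
    obtain ⟨z, hzW, rfl⟩ := Finset.mem_image.1 hA
    exact (hz z hzW).2
  obtain ⟨P, hPF, K, hPcard, hPinter⟩ := my_sunflower m w (W.image (Fs s)) hunif
    (by rw [hcardim]; exact hbig)
  -- pick the distinguished petal
  obtain ⟨Fj, hFj⟩ := Finset.card_pos.1 (show 0 < P.card by omega)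
  obtain ⟨zj, hzjW, hzjF⟩ := Finset.mem_image.1 (hPF hFj)
  obtain ⟨Sj, hSjk, hSj1, hSjr, hSjstrict⟩ := hsys zj (hWY hzjW)
  set ρ := dminS Sj zj with hρ
  have hKsub : ∀ A ∈ P, A ≠ Fj → K ⊆ A ∧ K ⊆ Fj := by
    intro A hA hAF
    have h := hPinter A hA Fj hFj hAF
    constructor
    · rw [← h]; exact Finset.inter_subset_left
    · rw [← h]; exact Finset.inter_subset_right
  -- for each other petal, a serving center and a witness coordinate
  obtain ⟨i0, _hi0⟩ := Finset.card_pos.1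
    (show 0 < Fj.card by rw [hunif Fj (hPF hFj)]; omega)
  have hserve : ∀ A, ∃ si : (Fin d → Bool) × Fin d, A ∈ P.erase Fj →
      si.1 ∈ Sj ∧ si.2 ∈ A \ K ∧
      si.2 ∈ symmDiff (Finset.univ.filter fun i => i ∉ D ∧ si.1 i ≠ s i) K ∧
      (symmDiff (Finset.univ.filter fun i => i ∉ D ∧ si.1 i ≠ s i) K).card ≤ r + m - 1 := by
    intro A
    by_cases hA : A ∈ P.erase Fj
    swap
    · exact ⟨(s, i0), fun h => absurd h hA⟩
    obtain ⟨hAne, hAP⟩ := Finset.mem_erase.1 hA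
    obtain ⟨zl, hzlW, hzlF⟩ := Finset.mem_image.1 (hPF hAP)
    have hzlj : zl ≠ zj := by
      intro hcon
      exact hAne (by rw [← hzlF, hcon, hzjF])
    have hlt : dminS Sj zl < ρ := hSjstrict zl (hWY hzlW) hzlj
    have hSjne : Sj.Nonempty := S_nonempty_of_dminS_pos hSj1
    obtain ⟨s', hs'Sj, hs'p⟩ := dminS_attained hSjne zl
    have hKA : K ⊆ A := (hKsub A hAP hAne).1
    have hKF : K ⊆ Fj := (hKsub A hAP hAne).2
    -- distances via symmetric differences
    set E := (Finset.univ.filter fun i => i ∉ D ∧ s' i ≠ s i) with hE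
    set G := symmDiff E K with hG
    have hdist : ∀ zz ∈ W, K ⊆ Fs s zz →
        pdist (toPartial s') zz = (symmDiff G (Fs s zz \ K)).card := by
      intro zz hzzW hKzz
      rw [pdist_symmDiff (s := s) (hz zz hzzW).1]
      congr 1
      rw [hG, symmDiff_assoc]
      congr 1
      rw [Disjoint.symmDiff_eq_sup Finset.disjoint_sdiff]
      exact (Finset.union_sdiff_of_subset hKzz).symm
    have hcards : (A \ K).card = (Fj \ K).card := by
      rw [Finset.card_sdiff_of_subset hKA, Finset.card_sdiff_of_subset hKF, hunif A (hPF hAP),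
        hunif Fj (hPF hFj)]
    have hdistl : pdist (toPartial s') zl ≤ ρ - 1 := by
      rw [hs'p]; omega
    have hρle : ρ ≤ pdist (toPartial s') zj := hρ ▸ dminS_le hs'Sj zj
    have hwitness : ¬ Disjoint G (A \ K) := by
      intro hdisj
      have h1 : pdist (toPartial s') zl = G.card + (A \ K).card := by
        rw [hdist zl hzlW (hzlF ▸ hKA), hzlF, card_symmDiff_of_disjoint hdisj]
      have h2 : pdist (toPartial s') zj ≤ G.card + (Fj \ K).card := by
        rw [hdist zj hzjW (hzjF ▸ hKF), hzjF]
        exact card_symmDiff_le _ _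
      omega
    rw [Finset.not_disjoint_iff] at hwitness
    obtain ⟨i, hiG, hiA⟩ := hwitness
    refine ⟨(s', i), fun _ => ⟨hs'Sj, hiA, hiG, ?_⟩⟩
    -- |G| ≤ r + m - 1
    show (symmDiff (Finset.univ.filter fun i2 => i2 ∉ D ∧ s' i2 ≠ s i2) K).card ≤ r + m - 1
    rw [← hE, ← hG]
    have h3 : G.card ≤ (symmDiff G (A \ K)).card + (A \ K).card := card_le_symmDiff_add _ _
    have h4 : (symmDiff G (A \ K)).card = pdist (toPartial s') zl := by
      rw [hdist zl hzlW (hzlF ▸ hKA), hzlF]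
    have h5 : (A \ K).card ≤ m := by
      rw [← hunif A (hPF hAP)]
      exact Finset.card_le_card Finset.sdiff_subset
    have h6 : 1 ≤ ρ := hSj1
    have h7 : ρ ≤ r := hSjr
    omega
  choose ψ hψ using hserve
  -- injective map from P.erase Fj
  have hinj2 : Set.InjOn ψ (P.erase Fj) := by
    intro A hA B hB hAB
    rw [Finset.mem_coe] at hA hB
    by_contra hne
    have hiA := (hψ A hA).2.1
    have hiB := (hψ B hB).2.1
    rw [hAB] at hiA
    have hABK := hPinter A (Finset.mem_of_mem_erase hA) B (Finset.mem_of_mem_erase hB) hne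
    have h1 := Finset.mem_sdiff.1 hiA
    have h2 := Finset.mem_sdiff.1 hiB
    have : (ψ B).2 ∈ A ∩ B := Finset.mem_inter.2 ⟨h1.1, h2.1⟩
    rw [hABK] at this
    exact h1.2 this
  -- count the image
  have hmap : ∀ A ∈ P.erase Fj, ψ A ∈
      (Sj.filter (fun s' => (symmDiff (Finset.univ.filter fun i => i ∉ D ∧ s' i ≠ s i) K).card ≤ r + m - 1)).biUnion
        (fun s' => (symmDiff (Finset.univ.filter fun i => i ∉ D ∧ s' i ≠ s i) K).image (fun i => (s', i))) := by
    intro A hA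
    obtain ⟨hs1, _hs2, hs3, hs4⟩ := hψ A hA
    apply Finset.mem_biUnion.2
    refine ⟨(ψ A).1, Finset.mem_filter.2 ⟨hs1, hs4⟩, ?_⟩
    apply Finset.mem_image.2
    exact ⟨(ψ A).2, hs3, rfl⟩
  have hcount : (P.erase Fj).card ≤ k * (r + m - 1) := by
    calc (P.erase Fj).card ≤ _ := Finset.card_le_card_of_injOn ψ hmap hinj2
      _ ≤ ∑ s' ∈ (Sj.filter (fun s' => (symmDiff (Finset.univ.filter fun i => i ∉ D ∧ s' i ≠ s i) K).card ≤ r + m - 1)),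
            ((symmDiff (Finset.univ.filter fun i => i ∉ D ∧ s' i ≠ s i) K).image (fun i => ((s', i) : (Fin d → Bool) × Fin d))).card :=
          Finset.card_biUnion_le
      _ ≤ ∑ s' ∈ (Sj.filter (fun s' => (symmDiff (Finset.univ.filter fun i => i ∉ D ∧ s' i ≠ s i) K).card ≤ r + m - 1)),
            (r + m - 1) := by
          apply Finset.sum_le_sum
          intro s' hs'
          calc ((symmDiff (Finset.univ.filter fun i => i ∉ D ∧ s' i ≠ s i) K).image (fun i => ((s', i) : (Fin d → Bool) × Fin d))).card
              ≤ (symmDiff (Finset.univ.filter fun i => i ∉ D ∧ s' i ≠ s i) K).card := Finset.card_image_le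
            _ ≤ r + m - 1 := (Finset.mem_filter.1 hs').2
      _ = (Sj.filter (fun s' => (symmDiff (Finset.univ.filter fun i => i ∉ D ∧ s' i ≠ s i) K).card ≤ r + m - 1)).card * (r + m - 1) := by
          rw [Finset.sum_const, smul_eq_mul]
      _ ≤ k * (r + m - 1) := by
          apply Nat.mul_le_mul_right
          exact le_trans (Finset.card_le_card (Finset.filter_subset _ _)) hSjk
  have herase : (P.erase Fj).card = P.card - 1 := Finset.card_erase_of_mem hFj
  omega

lemma arith_step (k r i : ℕ) :
    k * (Nat.factorial (i+1) * (k * (r + (i+1) - 1) + 1) ^ (i+1))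
      ≤ Nat.factorial (i+2) * (k * (r + (i+2)) + 2) ^ (i+2) := by
  set m := i + 1 with hm
  set a := k * (r + m - 1) + 1 with ha
  set b := k * (r + (m+1)) + 2 with hb
  have hab : a ≤ b := by
    have : k * (r + m - 1) ≤ k * (r + (m+1)) := Nat.mul_le_mul_left k (by omega)
    omega
  have hkb : k ≤ b := by
    have : k * 1 ≤ k * (r + (m+1)) := Nat.mul_le_mul_left k (by omega)
    omega
  have hfact : Nat.factorial m ≤ Nat.factorial (m+1) := Nat.factorial_le (by omega)
  have hpow : a ^ m ≤ b ^ m := Nat.pow_le_pow_left hab m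
  calc k * (Nat.factorial m * a ^ m) = Nat.factorial m * a ^ m * k := by ring
    _ ≤ Nat.factorial (m+1) * b ^ m * b := Nat.mul_le_mul (Nat.mul_le_mul hfact hpow) hkb
    _ = Nat.factorial (m+1) * b ^ (m+1) := by ring

lemma arith_total (k r tc : ℕ) (hr : 1 ≤ r) :
    1 + k * 2 ^ tc * (∑ m ∈ Finset.range r, farith k r m)
      ≤ 2 ^ tc * ∑ t ∈ Finset.Icc 1 r, garith k r t := by
  obtain ⟨r', rfl⟩ : ∃ r', r = r' + 1 := ⟨r - 1, by omega⟩
  have hL : ∑ m ∈ Finset.range (r'+1), farith k (r'+1) m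
      = (∑ i ∈ Finset.range r', farith k (r'+1) (i+1)) + 1 := by
    rw [Finset.sum_range_succ', farith_zero]
  have hR : ∑ t ∈ Finset.Icc 1 (r'+1), garith k (r'+1) t
      = ∑ i ∈ Finset.range (r'+1), garith k (r'+1) (1+i) := by
    rw [← Finset.Ico_add_one_right_eq_Icc, Finset.sum_Ico_eq_sum_range]
    norm_num
  have hR2 : ∑ i ∈ Finset.range (r'+1), garith k (r'+1) (1+i)
      = (∑ i ∈ Finset.range r', garith k (r'+1) (1+(i+1))) + garith k (r'+1) (1+0) :=
    Finset.sum_range_succ' _ _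
  have hterm : k * ∑ i ∈ Finset.range r', farith k (r'+1) (i+1)
      ≤ ∑ i ∈ Finset.range r', garith k (r'+1) (1+(i+1)) := by
    rw [Finset.mul_sum]
    apply Finset.sum_le_sum
    intro i _
    have h := arith_step k (r'+1) i
    have he : 1 + (i+1) = i + 2 := by omega
    rw [he]
    exact h
  have hone : 1 + k * 2 ^ tc ≤ 2 ^ tc * garith k (r'+1) (1+0) := by
    have h2 : 1 ≤ 2 ^ tc := Nat.one_le_two_pow
    have hgval : garith k (r'+1) (1+0) = k * (r' + 2) + 2 := by
      show Nat.factorial (1+0) * (k * (r' + 1 + (1+0)) + 2) ^ (1+0) = k * (r' + 2) + 2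
      simp [Nat.factorial]
    rw [hgval]
    calc 1 + k * 2 ^ tc ≤ 2 ^ tc + k * 2 ^ tc := by omega
      _ = 2 ^ tc * (k + 1) := by ring
      _ ≤ 2 ^ tc * (k * (r'+2) + 2) := by
          apply Nat.mul_le_mul_left
          have hkk : k ≤ k * (r'+2) := Nat.le_mul_of_pos_right k (by omega)
          omega
  calc 1 + k * 2 ^ tc * (∑ m ∈ Finset.range (r'+1), farith k (r'+1) m)
      = 1 + k * 2 ^ tc * ((∑ i ∈ Finset.range r', farith k (r'+1) (i+1)) + 1) := by rw [hL]
    _ = (1 + k * 2 ^ tc) + 2 ^ tc * (k * ∑ i ∈ Finset.range r', farith k (r'+1) (i+1)) := by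
        ring
    _ ≤ 2 ^ tc * garith k (r'+1) (1+0)
          + 2 ^ tc * (∑ i ∈ Finset.range r', garith k (r'+1) (1+(i+1))) :=
        Nat.add_le_add hone (Nat.mul_le_mul_left _ hterm)
    _ = 2 ^ tc * ((∑ i ∈ Finset.range r', garith k (r'+1) (1+(i+1))) + garith k (r'+1) (1+0)) := by
        ring
    _ = 2 ^ tc * ∑ t ∈ Finset.Icc 1 (r'+1), garith k (r'+1) t := by rw [hR, hR2]

lemma system_bound (k r : ℕ) (T : Finset (Fin d)) (Y : Finset (Fin d → Option Bool))
    (hpat : ∀ z ∈ Y, ∀ i, z i = none → i ∈ T)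
    (hsys : ∀ y ∈ Y, ∃ S : Finset (Fin d → Bool), S.card ≤ k ∧
      1 ≤ dminS S y ∧ dminS S y ≤ r ∧ ∀ z ∈ Y, z ≠ y → dminS S z < dminS S y) :
    Y.card ≤ 2 ^ T.card * ∑ t ∈ Finset.Icc 1 r, Nat.factorial t * (k * (r + t) + 2) ^ t := by
  have hgsum : ∑ t ∈ Finset.Icc 1 r, Nat.factorial t * (k * (r + t) + 2) ^ t
      = ∑ t ∈ Finset.Icc 1 r, garith k r t := rfl
  rw [hgsum]
  rcases Y.eq_empty_or_nonempty with rfl | ⟨y0, hy0⟩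
  · simp
  obtain ⟨S0, hS0k, hS01, hS0r, hS0strict⟩ := hsys y0 hy0
  have hr1 : 1 ≤ r := le_trans hS01 hS0r
  have hS0ne : S0.Nonempty := S_nonempty_of_dminS_pos hS01
  have hserve : ∀ z, ∃ s : Fin d → Bool, z ∈ Y.erase y0 →
      s ∈ S0 ∧ pdist (toPartial s) z ≤ r - 1 := by
    intro z
    by_cases hz : z ∈ Y.erase y0
    · obtain ⟨s, hsS, hsp⟩ := dminS_attained hS0ne z
      refine ⟨s, fun _ => ⟨hsS, ?_⟩⟩
      have hstr := hS0strict z (Finset.mem_of_mem_erase hz) (Finset.ne_of_mem_erase hz)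
      omega
    · exact ⟨fun _ => true, fun h => absurd h hz⟩
  choose sc hsc using hserve
  have hcls : ∀ z ∈ Y.erase y0,
      (sc z, ((Finset.univ.filter fun i => z i = none : Finset (Fin d)), (Fs (sc z) z).card))
        ∈ S0 ×ˢ (T.powerset ×ˢ Finset.range r) := by
    intro z hz
    obtain ⟨hs1, hs2⟩ := hsc z hz
    rw [Finset.mem_product]
    refine ⟨hs1, ?_⟩
    rw [Finset.mem_product]
    constructor
    · rw [Finset.mem_powerset]
      intro i hi
      rw [Finset.mem_filter] at hi
      exact hpat z (Finset.mem_of_mem_erase hz) i hi.2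
    · rw [Finset.mem_range]
      show (Fs (sc z) z).card < r
      have hpe := pdist_eq_Fs (sc z) z
      omega
  have hsum := Finset.card_eq_sum_card_fiberwise hcls
  have hfib : ∀ b ∈ S0 ×ˢ (T.powerset ×ˢ Finset.range r),
      ((Y.erase y0).filter (fun z =>
          (sc z, ((Finset.univ.filter fun i => z i = none : Finset (Fin d)), (Fs (sc z) z).card)) = b)).card
        ≤ farith k r b.2.2 := by
    rintro ⟨s, D, m⟩ _hb
    have hcond : ∀ z ∈ ((Y.erase y0).filter (fun z =>
          (sc z, ((Finset.univ.filter fun i => z i = none : Finset (Fin d)), (Fs (sc z) z).card)) = (s, D, m))),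
        (∀ i, z i = none ↔ i ∈ D) ∧ (Fs s z).card = m := by
      intro z hzW
      rw [Finset.mem_filter] at hzW
      obtain ⟨hz1, hz2⟩ := hzW
      have heq1 : sc z = s := congrArg Prod.fst hz2
      have heq2 : (Finset.univ.filter fun i => z i = none : Finset (Fin d)) = D :=
        congrArg (fun p => p.2.1) hz2
      have heq3 : (Fs (sc z) z).card = m := congrArg (fun p => p.2.2) hz2
      constructor
      · intro i
        rw [← heq2, Finset.mem_filter]
        simp
      · rw [← heq1, heq3]
    have hfb := fiber_bound k r m Y
      ((Y.erase y0).filter (fun z =>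
          (sc z, ((Finset.univ.filter fun i => z i = none : Finset (Fin d)), (Fs (sc z) z).card)) = (s, D, m)))
      (le_trans (Finset.filter_subset _ _) (Finset.erase_subset _ _)) hsys s D hcond
    exact hfb
  have hprodsum : ∑ b ∈ S0 ×ˢ (T.powerset ×ˢ Finset.range r), farith k r b.2.2
      = S0.card * (T.powerset.card * ∑ m ∈ Finset.range r, farith k r m) := by
    rw [Finset.sum_product]
    have hinner : ∀ x : Fin d → Bool, ∑ y ∈ T.powerset ×ˢ Finset.range r,
        farith k r ((x, y).2.2)
        = T.powerset.card * ∑ m ∈ Finset.range r, farith k r m := by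
      intro x
      rw [Finset.sum_product]
      show (∑ _x1 ∈ T.powerset, ∑ m ∈ Finset.range r, farith k r m) = _
      rw [Finset.sum_const, smul_eq_mul]
    calc ∑ x ∈ S0, ∑ y ∈ T.powerset ×ˢ Finset.range r, farith k r ((x, y).2.2)
        = ∑ _x ∈ S0, T.powerset.card * ∑ m ∈ Finset.range r, farith k r m := by
          apply Finset.sum_congr rfl
          intro x _
          exact hinner x
      _ = S0.card * (T.powerset.card * ∑ m ∈ Finset.range r, farith k r m) := by
          rw [Finset.sum_const, smul_eq_mul]
  have htotal : (Y.erase y0).card ≤ k * 2 ^ T.card * ∑ m ∈ Finset.range r, farith k r m := by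
    rw [hsum]
    calc (∑ b ∈ S0 ×ˢ (T.powerset ×ˢ Finset.range r),
          ((Y.erase y0).filter (fun z =>
            (sc z, ((Finset.univ.filter fun i => z i = none : Finset (Fin d)), (Fs (sc z) z).card)) = b)).card)
        ≤ ∑ b ∈ S0 ×ˢ (T.powerset ×ˢ Finset.range r), farith k r b.2.2 := Finset.sum_le_sum hfib
      _ = S0.card * (T.powerset.card * ∑ m ∈ Finset.range r, farith k r m) := hprodsum
      _ ≤ k * (2 ^ T.card * ∑ m ∈ Finset.range r, farith k r m) := by
          rw [Finset.card_powerset]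
          apply Nat.mul_le_mul_right _ hS0k
      _ = k * 2 ^ T.card * ∑ m ∈ Finset.range r, farith k r m := by ring
  have hpos : 1 ≤ Y.card := Finset.card_pos.2 ⟨y0, hy0⟩
  have hYcard : Y.card = (Y.erase y0).card + 1 := by
    rw [Finset.card_erase_of_mem hy0]
    exact (Nat.succ_pred_eq_of_pos hpos).symm
  have harith := arith_total k r T.card hr1
  calc Y.card = (Y.erase y0).card + 1 := hYcard
    _ ≤ k * 2 ^ T.card * (∑ m ∈ Finset.range r, farith k r m) + 1 :=
        Nat.add_le_add_right htotal 1
    _ = 1 + k * 2 ^ T.card * (∑ m ∈ Finset.range r, farith k r m) := Nat.add_comm _ _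
    _ ≤ 2 ^ T.card * ∑ t ∈ Finset.Icc 1 r, garith k r t := harith

lemma val_le_sub {M R : Multiset (Fin d → Option Bool)}
    {Y : Finset (Fin d → Option Bool)} (hY : ∀ y ∈ Y, y ∈ (M - R).toFinset) :
    Y.val ≤ M - R := by
  rw [Multiset.le_iff_count]
  intro a
  by_cases ha : a ∈ Y
  · have h1 : Y.val.count a ≤ 1 := Multiset.nodup_iff_count_le_one.1 Y.nodup a
    have h2 : 1 ≤ (M - R).count a := by
      have := Multiset.mem_toFinset.1 (hY a ha)
      exact Multiset.one_le_count_iff_mem.2 this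
    omega
  · have : Y.val.count a = 0 := by
      rw [Multiset.count_eq_zero]
      exact fun hc => ha (Eq.mp Finset.mem_val hc)
    omega

theorem statement_10 {d : ℕ} (k r : ℕ)
    (M R : Multiset (Fin d → Option Bool)) (T : Finset (Fin d))
    (hRM : R ≤ M)
    (hcover : ∀ v ∈ M, ∀ i : Fin d, v i = none → v ∈ R ∨ i ∈ T) :
    ∃ M' : Multiset (Fin d → Option Bool), M' ≤ M ∧ R ≤ M' ∧
      (∀ v ∈ M, v ∉ R →
        Multiset.card (M'.filter fun x => x ∉ R ∧ pdist v x ≤ r) ≤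
          2 ^ T.card * ∑ t ∈ Finset.Icc 1 r, t.factorial * (k * (r + t) + 2) ^ t) ∧
      (∀ S : Finset (Fin d → Bool), S.card ≤ k →
        (∀ m ∈ M, ∃ s ∈ S, pdist (toPartial s) m ≤ r) →
        (M.map fun y => dminS S y).sup = (M'.map fun y => dminS S y).sup) := by
  classical
  set good : Finset (Fin d → Option Bool) → Prop := fun Y => ∀ S : Finset (Fin d → Bool),
    S.card ≤ k → (∀ m ∈ M, ∃ s ∈ S, pdist (toPartial s) m ≤ r) →
    ((R + Y.val).map (fun y => dminS S y)).sup = (M.map (fun y => dminS S y)).sup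
    with hgood_def
  set Y0 : Finset (Fin d → Option Bool) := (M - R).toFinset.filter (fun x => x ∉ R) with hY0
  -- any subset of Y0 gives a submultiset of M
  have hsubM : ∀ Y : Finset (Fin d → Option Bool), Y ⊆ Y0 → R + Y.val ≤ M := by
    intro Y hYsub
    have h1 : Y.val ≤ M - R := by
      apply val_le_sub
      intro y hy
      exact Finset.mem_of_mem_filter y (hYsub hy)
    calc R + Y.val ≤ R + (M - R) := add_le_add (le_refl R) h1
      _ = M := by rw [add_comm]; exact tsub_add_cancel_of_le hRM
  -- Y0 is good
  have hY0good : good Y0 := by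
    intro S _hk _hcov
    apply le_antisymm
    · exact sup_map_mono _ (hsubM Y0 (subset_refl _))
    · apply Multiset.sup_le.2
      intro b hb
      obtain ⟨y, hyM, rfl⟩ := Multiset.mem_map.1 hb
      have hymem : y ∈ R + Y0.val := by
        by_cases hyR : y ∈ R
        · exact Multiset.mem_add.2 (Or.inl hyR)
        · apply Multiset.mem_add.2
          right
          apply Eq.mpr Finset.mem_val
          rw [hY0, Finset.mem_filter]
          refine ⟨Multiset.mem_toFinset.2 ?_, hyR⟩
          rw [← Multiset.one_le_count_iff_mem, Multiset.count_sub]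
          have h1 : 1 ≤ M.count y := Multiset.one_le_count_iff_mem.2 hyM
          have h2 : R.count y = 0 := Multiset.count_eq_zero.2 hyR
          omega
      exact Multiset.le_sup (Multiset.mem_map_of_mem _ hymem)
  -- minimal good subset
  have hne : (Y0.powerset.filter good).Nonempty :=
    ⟨Y0, Finset.mem_filter.2 ⟨Finset.mem_powerset.2 (subset_refl _), hY0good⟩⟩
  obtain ⟨Y, hYmem, hYmin⟩ := Finset.exists_min_image _ Finset.card hne
  rw [Finset.mem_filter, Finset.mem_powerset] at hYmem
  obtain ⟨hYsub, hYgood⟩ := hYmem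
  -- the system property from minimality
  have hsys : ∀ y ∈ Y, ∃ S : Finset (Fin d → Bool), S.card ≤ k ∧
      1 ≤ dminS S y ∧ dminS S y ≤ r ∧ ∀ z ∈ Y, z ≠ y → dminS S z < dminS S y := by
    intro y hy
    have herase_sub : Y.erase y ⊆ Y0 := fun z hz => hYsub (Finset.mem_of_mem_erase hz)
    have hbad : ¬ good (Y.erase y) := by
      intro hcon
      have hmem : Y.erase y ∈ Y0.powerset.filter good :=
        Finset.mem_filter.2 ⟨Finset.mem_powerset.2 herase_sub, hcon⟩
      have h1 := hYmin _ hmem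
      have h2 : (Y.erase y).card < Y.card := Finset.card_erase_lt_of_mem hy
      omega
    simp only [hgood_def] at hbad
    push_neg at hbad
    obtain ⟨S, hSk, hScov, hSne⟩ := hbad
    have hyM : y ∈ M := by
      have h1 := Finset.mem_of_mem_filter y (hYsub hy)
      exact Multiset.mem_of_le (tsub_le_self) (Multiset.mem_toFinset.1 h1)
    have hble : ((R + (Y.erase y).val).map (fun z => dminS S z)).sup
        ≤ (M.map (fun z => dminS S z)).sup := sup_map_mono _ (hsubM _ herase_sub)
    have hblt : ((R + (Y.erase y).val).map (fun z => dminS S z)).sup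
        < (M.map (fun z => dminS S z)).sup := lt_of_le_of_ne hble hSne
    have hgoodY := hYgood S hSk hScov
    have hpos : 0 < ((R + Y.val).map (fun z => dminS S z)).sup := by omega
    obtain ⟨b, hbmem, hbsup⟩ := sup_attained _ hpos
    obtain ⟨w, hwmem, hwval⟩ := Multiset.mem_map.1 hbmem
    have hwy : w = y := by
      by_contra hwy
      have hwmem2 : w ∈ R + (Y.erase y).val := by
        rcases Multiset.mem_add.1 hwmem with h | h
        · exact Multiset.mem_add.2 (Or.inl h)
        · apply Multiset.mem_add.2
          right
          apply Eq.mpr Finset.mem_val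
          exact Finset.mem_erase.2 ⟨hwy, Eq.mp Finset.mem_val h⟩
      have : dminS S w ≤ ((R + (Y.erase y).val).map (fun z => dminS S z)).sup :=
        Multiset.le_sup (Multiset.mem_map_of_mem _ hwmem2)
      omega
    have hdy : dminS S y = ((R + Y.val).map (fun z => dminS S z)).sup := by
      rw [← hwy, hwval]
      exact hbsup.symm
    refine ⟨S, hSk, ?_, ?_, ?_⟩
    · omega
    · obtain ⟨s, hsS, hsr⟩ := hScov y hyM
      have := dminS_le hsS y
      omega
    · intro z hz hzw
      have hzmem : z ∈ R + (Y.erase y).val := by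
        apply Multiset.mem_add.2
        right
        apply Eq.mpr Finset.mem_val
        exact Finset.mem_erase.2 ⟨hzw, hz⟩
      have : dminS S z ≤ ((R + (Y.erase y).val).map (fun x => dminS S x)).sup :=
        Multiset.le_sup (Multiset.mem_map_of_mem _ hzmem)
      omega
  -- pattern condition
  have hpat : ∀ z ∈ Y, ∀ i, z i = none → i ∈ T := by
    intro z hz i hnone
    have h1 := Finset.mem_filter.1 (hYsub hz)
    have hzM : z ∈ M := Multiset.mem_of_le (tsub_le_self) (Multiset.mem_toFinset.1 h1.1)
    rcases hcover z hzM i hnone with h | h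
    · exact absurd h h1.2
    · exact h
  have hYcard := system_bound k r T Y hpat hsys
  -- assemble
  refine ⟨R + Y.val, hsubM Y hYsub, Multiset.le_add_right _ _, ?_, ?_⟩
  · intro v _hvM _hvR
    rw [Multiset.filter_add]
    have hRzero : (R.filter fun x => x ∉ R ∧ pdist v x ≤ r) = 0 :=
      Multiset.filter_eq_nil.2 (fun a ha hcon => hcon.1 ha)
    rw [hRzero, zero_add]
    have h1 : Multiset.card (Y.val.filter fun x => x ∉ R ∧ pdist v x ≤ r)
        ≤ Multiset.card Y.val := Multiset.card_le_card (Multiset.filter_le _ _)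
    have h2 : Multiset.card Y.val = Y.card := rfl
    calc Multiset.card (Y.val.filter fun x => x ∉ R ∧ pdist v x ≤ r) ≤ Y.card := by omega
      _ ≤ _ := hYcard
  · intro S hSk hScov
    exact (hYgood S hSk hScov).symm

end Core
end

section
/- Let k, r ∈ ℕ and let M be a finite multiset of vectors in {0,1,□}^d with cover (R_M, T_M). Then there is a subset M' of M with R_M ⊆ M' satisfying: (P1) for every v ∈ M \ R_M, the number of vectors x ∈ M' \ R_M with δ(v,x) ≤ r is at most 2^{|T_M|}·(Σ_{t=1}^{r+|T_M|} t!·(2^{|T_M|}·k·(r+t+|T_M|)+2)^t) + 1; and (P2) M has a completion admitting a partition into at most k parts, each of diameter at most r, if and only if M' does. -/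
open scoped Classical

namespace Statement12

def Solv {d : ℕ} (k r : ℕ) (M : Multiset (Fin d → Option Bool)) : Prop :=
  ∃ Mc : Multiset (Fin d → Bool), IsCompletion M Mc ∧ HasDiamPartitionM Mc k r

lemma split_le_add {α : Type*} (S A B : Multiset α) (h : S ≤ A + B) :
    ∃ S₁ S₂, S = S₁ + S₂ ∧ S₁ ≤ A ∧ S₂ ≤ B :=
  ⟨S - B, S - (S - B), (add_tsub_cancel_of_le tsub_le_self).symm, tsub_le_iff_right.mpr h,
    tsub_tsub_le⟩

lemma join_restrict {α : Type*} (P : Multiset (Multiset α)) :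
    ∀ S, S ≤ P.join → ∃ Q : Multiset (Multiset α), Multiset.card Q = Multiset.card P ∧
      Q.join = S ∧ ∀ q ∈ Q, ∃ p ∈ P, q ≤ p := by
  induction P using Multiset.induction_on with
  | empty =>
    intro S hS
    simp only [Multiset.join_zero, Multiset.le_zero] at hS
    exact ⟨0, by simp, by simp [hS], by simp⟩
  | cons p P ih =>
    intro S hS
    rw [Multiset.join_cons] at hS
    obtain ⟨S₁, S₂, rfl, h₁, h₂⟩ := split_le_add S p P.join hS
    obtain ⟨Q, hQc, hQj, hQle⟩ := ih S₂ h₂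
    refine ⟨S₁ ::ₘ Q, by simp [hQc], by simp [Multiset.join_cons, hQj], ?_⟩
    intro q hq
    rcases Multiset.mem_cons.mp hq with rfl | hq
    · exact ⟨p, Multiset.mem_cons_self _ _, h₁⟩
    · obtain ⟨p', hp', hle⟩ := hQle q hq
      exact ⟨p', Multiset.mem_cons_of_mem hp', hle⟩

lemma Solv.mono {d : ℕ} {k r : ℕ} {M W : Multiset (Fin d → Option Bool)}
    (hW : W ≤ M) (h : Solv k r M) : Solv k r W := by
  obtain ⟨Mc, hcomp, P, hPk, hPj, hPd⟩ := h
  have hM : W + (M - W) = M := add_tsub_cancel_of_le hW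
  rw [IsCompletion, ← hM, Multiset.rel_add_left] at hcomp
  obtain ⟨Mc₁, Mc₂, h₁, _h₂, rfl⟩ := hcomp
  obtain ⟨Q, hQc, hQj, hQle⟩ := join_restrict P Mc₁ (by rw [hPj]; exact le_add_right le_rfl)
  refine ⟨Mc₁, h₁, Q, hQc ▸ hPk, hQj, ?_⟩
  intro q hq a ha b hb
  obtain ⟨p, hp, hle⟩ := hQle q hq
  exact hPd p hp a (Multiset.mem_of_le hle ha) b (Multiset.mem_of_le hle hb)

lemma completion_mem {d : ℕ} {M : Multiset (Fin d → Option Bool)} {Mc} {x}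
    (h : IsCompletion M Mc) (hx : x ∈ M) :
    ∃ c ∈ Mc, ∀ i (b : Bool), x i = some b → c i = b := by
  rw [IsCompletion, ← Multiset.cons_erase hx, Multiset.rel_cons_left] at h
  obtain ⟨c, cs, hc, _, rfl⟩ := h
  exact ⟨c, Multiset.mem_cons_self _ _, hc⟩

lemma solv_insert {d k r : ℕ} {N : Multiset (Fin d → Option Bool)}
    {Mc : Multiset (Fin d → Bool)} {P : Multiset (Multiset (Fin d → Bool))}
    {C : Multiset (Fin d → Bool)}
    (hcomp : IsCompletion N Mc) (hPk : Multiset.card P ≤ k) (hPj : P.join = Mc)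
    (hPd : ∀ p ∈ P, ∀ a ∈ p, ∀ b ∈ p, hammingDist a b ≤ r) (hC : C ∈ P)
    (x : Fin d → Option Bool) (c : Fin d → Bool)
    (hcompl : ∀ i (b : Bool), x i = some b → c i = b)
    (hclose : ∀ z ∈ C, hammingDist c z ≤ r) : Solv k r (x ::ₘ N) := by
  refine ⟨c ::ₘ Mc, Multiset.Rel.cons hcompl hcomp, (c ::ₘ C) ::ₘ P.erase C, ?_, ?_, ?_⟩
  · rw [Multiset.card_cons, Multiset.card_erase_of_mem hC]
    have h1 : 0 < Multiset.card P := Multiset.card_pos_iff_exists_mem.mpr ⟨C, hC⟩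
    rw [Nat.pred_eq_sub_one]
    omega
  · rw [Multiset.join_cons]
    have : P.join = C + (P.erase C).join := by
      conv_lhs => rw [← Multiset.cons_erase hC]
      rw [Multiset.join_cons]
    rw [← hPj, this, Multiset.cons_add]
  · intro p hp a ha b hb
    rcases Multiset.mem_cons.mp hp with rfl | hp
    · have hcc : ∀ u ∈ c ::ₘ C, hammingDist c u ≤ r := by
        intro u hu
        rcases Multiset.mem_cons.mp hu with rfl | hu
        · simp [hammingDist_self]
        · exact hclose u hu
      rcases Multiset.mem_cons.mp ha with rfl | ha2
      · exact hcc b hb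
      · rcases Multiset.mem_cons.mp hb with rfl | hb2
        · rw [hammingDist_comm]
          exact hcc a ha
        · exact hPd C hC a ha2 b hb2
    · exact hPd p (Multiset.mem_of_le (Multiset.erase_le _ _) hp) a ha b hb

lemma solv_cons_mem {d k r : ℕ} {N : Multiset (Fin d → Option Bool)} {x}
    (hx : x ∈ N) (h : Solv k r N) : Solv k r (x ::ₘ N) := by
  obtain ⟨Mc, hcomp, P, hPk, hPj, hPd⟩ := h
  obtain ⟨c, hcMc, hc⟩ := completion_mem hcomp hx
  rw [← hPj] at hcMc
  obtain ⟨C, hC, hcC⟩ := Multiset.mem_join.mp hcMc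
  exact solv_insert hcomp hPk hPj hPd hC x c hc (fun z hz => hPd C hC c hcC z hz)

theorem sunflower_exists {α : Type*} [DecidableEq α] :
    ∀ (t p : ℕ) (𝒜 : Finset (Finset α)), (∀ A ∈ 𝒜, A.card = t) →
      Nat.factorial t * p ^ t < 𝒜.card →
      ∃ 𝒮 ⊆ 𝒜, 𝒮.card = p + 1 ∧ ∃ Y : Finset α, ∀ A ∈ 𝒮, ∀ B ∈ 𝒮, A ≠ B → A ∩ B = Y := by
  intro t
  induction t with
  | zero =>
    intro p 𝒜 h𝒜 hcard
    have hsub : 𝒜 ⊆ {∅} := fun A hA =>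
      Finset.mem_singleton.mpr (Finset.card_eq_zero.mp (h𝒜 A hA))
    have h1 := Finset.card_le_card hsub
    simp only [Nat.factorial_zero, pow_zero, mul_one, Finset.card_singleton] at hcard h1
    omega
  | succ t ih =>
    intro p 𝒜 h𝒜 hcard
    classical
    set good : Finset (Finset (Finset α)) :=
      𝒜.powerset.filter (fun D => ∀ A ∈ D, ∀ B ∈ D, A ≠ B → Disjoint A B) with hgood
    have hne : good.Nonempty := ⟨∅, by simp [hgood]⟩
    obtain ⟨D, hDgood, hDmax⟩ := Finset.exists_max_image good Finset.card hne
    have hDsub : D ⊆ 𝒜 := Finset.mem_powerset.mp (Finset.mem_filter.mp hDgood).1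
    have hDdisj := (Finset.mem_filter.mp hDgood).2
    by_cases hp : p + 1 ≤ D.card
    · obtain ⟨𝒮, h𝒮D, h𝒮card⟩ := Finset.exists_subset_card_eq hp
      refine ⟨𝒮, h𝒮D.trans hDsub, h𝒮card, ∅, ?_⟩
      intro A hA B hB hAB
      exact Finset.disjoint_iff_inter_eq_empty.mp (hDdisj A (h𝒮D hA) B (h𝒮D hB) hAB)
    · push_neg at hp
      set U := D.sup id with hU
      have hUcard : U.card ≤ (t + 1) * p := by
        have h1 : U.card ≤ ∑ A ∈ D, A.card := by
          rw [hU, Finset.sup_eq_biUnion]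
          exact Finset.card_biUnion_le
        have h2 : ∑ A ∈ D, A.card = D.card * (t + 1) := by
          rw [Finset.sum_congr rfl (fun A hA => h𝒜 A (hDsub hA)), Finset.sum_const,
            smul_eq_mul]
        have h3 : D.card ≤ p := by omega
        calc U.card ≤ D.card * (t+1) := by omega
          _ ≤ p * (t+1) := Nat.mul_le_mul_right _ h3
          _ = (t+1) * p := Nat.mul_comm _ _
      have hsubU : ∀ X ∈ D, X ⊆ U := fun X hX => Finset.le_sup (f := id) hX
      have hhit : ∀ A ∈ 𝒜, ∃ e ∈ U, e ∈ A := by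
        intro A hA
        by_contra hcon
        push_neg at hcon
        have hAne : A.Nonempty := by
          rw [← Finset.card_pos, h𝒜 A hA]; omega
        have hAD : A ∉ D := by
          intro hAD
          obtain ⟨e, he⟩ := hAne
          exact hcon e (hsubU A hAD he) he
        have hins : insert A D ∈ good := by
          rw [hgood, Finset.mem_filter, Finset.mem_powerset]
          constructor
          · exact Finset.insert_subset hA hDsub
          · intro X hX Y hY hXY
            rcases Finset.mem_insert.mp hX with hXA | hXD
            · rcases Finset.mem_insert.mp hY with hYA | hYD
              · exact absurd (hXA.trans hYA.symm) hXY
              · subst hXA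
                exact Finset.disjoint_left.mpr fun e heX heY =>
                  hcon e (hsubU Y hYD heY) heX
            · rcases Finset.mem_insert.mp hY with hYA | hYD
              · subst hYA
                exact Finset.disjoint_right.mpr fun e heY heX =>
                  hcon e (hsubU X hXD heX) heY
              · exact hDdisj X hXD Y hYD hXY
        have hle := hDmax _ hins
        rw [Finset.card_insert_of_notMem hAD] at hle
        omega
      have hsum : 𝒜.card ≤ ∑ e ∈ U, (𝒜.filter (fun A => e ∈ A)).card := by
        have hsub : 𝒜 ⊆ U.biUnion (fun e => 𝒜.filter (fun A => e ∈ A)) := by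
          intro A hA
          obtain ⟨e, heU, heA⟩ := hhit A hA
          exact Finset.mem_biUnion.mpr ⟨e, heU, Finset.mem_filter.mpr ⟨hA, heA⟩⟩
        exact (Finset.card_le_card hsub).trans Finset.card_biUnion_le
      have hex : ∃ e ∈ U, Nat.factorial t * p ^ t < (𝒜.filter (fun A => e ∈ A)).card := by
        by_contra hcon
        push_neg at hcon
        have h4 : ∑ e ∈ U, (𝒜.filter (fun A => e ∈ A)).card ≤ U.card * (Nat.factorial t * p ^ t) := by
          calc ∑ e ∈ U, (𝒜.filter (fun A => e ∈ A)).card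
              ≤ ∑ _e ∈ U, Nat.factorial t * p ^ t := Finset.sum_le_sum fun e he => hcon e he
            _ = U.card * (Nat.factorial t * p ^ t) := by rw [Finset.sum_const, smul_eq_mul]
        have h5 : 𝒜.card ≤ (t+1) * p * (Nat.factorial t * p ^ t) :=
          hsum.trans (h4.trans (Nat.mul_le_mul_right _ hUcard))
        have h6 : (t+1) * p * (Nat.factorial t * p ^ t) = Nat.factorial (t+1) * p ^ (t+1) := by
          rw [Nat.factorial_succ, pow_succ]
          ring
        omega
      obtain ⟨e, _heU, he⟩ := hex
      set 𝒜e := 𝒜.filter (fun A => e ∈ A) with h𝒜e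
      have hemem : ∀ A ∈ 𝒜e, e ∈ A := fun A hA => (Finset.mem_filter.mp hA).2
      set ℬ := 𝒜e.image (fun A => A.erase e) with hℬ
      have hinj : Set.InjOn (fun A : Finset α => A.erase e) ↑𝒜e := by
        intro A hA B hB hab
        have : insert e (A.erase e) = insert e (B.erase e) := by
          simpa using congrArg (insert e) hab
        rwa [Finset.insert_erase (hemem A hA), Finset.insert_erase (hemem B hB)] at this
      have hBcard : ℬ.card = 𝒜e.card := Finset.card_image_of_injOn hinj
      have hBsets : ∀ B ∈ ℬ, B.card = t := by
        intro B hB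
        obtain ⟨A, hA, rfl⟩ := Finset.mem_image.mp hB
        rw [Finset.card_erase_of_mem (hemem A hA), h𝒜 A (Finset.filter_subset _ _ hA)]
        omega
      have heB : ∀ B ∈ ℬ, e ∉ B := by
        intro B hB
        obtain ⟨A, _hA, rfl⟩ := Finset.mem_image.mp hB
        exact Finset.notMem_erase _ _
      obtain ⟨𝒮', h𝒮'B, h𝒮'card, Y', hY'⟩ := ih p ℬ hBsets (by rw [hBcard]; exact he)
      have hinj2 : Set.InjOn (fun B : Finset α => insert e B) ↑𝒮' := by
        intro B1 h1 B2 h2 h12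
        have e1 : e ∉ B1 := heB _ (h𝒮'B h1)
        have e2 : e ∉ B2 := heB _ (h𝒮'B h2)
        have : (insert e B1).erase e = (insert e B2).erase e :=
          congrArg (fun s => Finset.erase s e) h12
        rwa [Finset.erase_insert e1, Finset.erase_insert e2] at this
      refine ⟨𝒮'.image (fun B => insert e B), ?_, ?_, insert e Y', ?_⟩
      · intro A' hA'
        obtain ⟨B, hB, rfl⟩ := Finset.mem_image.mp hA'
        obtain ⟨A, hA, rfl⟩ := Finset.mem_image.mp (h𝒮'B hB)
        rw [Finset.insert_erase (hemem A hA)]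
        exact Finset.filter_subset _ _ hA
      · rw [Finset.card_image_of_injOn hinj2, h𝒮'card]
      · intro A1 hA1 A2 hA2 h12
        obtain ⟨B1, hB1, rfl⟩ := Finset.mem_image.mp hA1
        obtain ⟨B2, hB2, rfl⟩ := Finset.mem_image.mp hA2
        have hBne : B1 ≠ B2 := fun hh => h12 (by rw [hh])
        have hcore := hY' B1 hB1 B2 hB2 hBne
        ext x
        simp only [Finset.mem_inter, Finset.mem_insert]
        constructor
        · rintro ⟨hx1 | hx1, hx2 | hx2⟩
          · exact Or.inl hx1
          · exact Or.inl hx1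
          · exact Or.inl hx2
          · exact Or.inr (hcore ▸ Finset.mem_inter.mpr ⟨hx1, hx2⟩)
        · rintro (rfl | hx)
          · exact ⟨Or.inl rfl, Or.inl rfl⟩
          · have hx' := Finset.mem_inter.mp (hcore ▸ hx : x ∈ B1 ∩ B2)
            exact ⟨Or.inr hx'.1, Or.inr hx'.2⟩

variable {d : ℕ}

noncomputable def Emap (vh : Fin d → Bool) (x : Fin d → Option Bool) : Finset (Fin d × Bool) :=
  Finset.univ.filter
    (fun q => (q.2 = true ∧ x q.1 = some (!(vh q.1))) ∨ (q.2 = false ∧ x q.1 = none))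

lemma Emap_mem_true {vh : Fin d → Bool} {x : Fin d → Option Bool} {j : Fin d} :
    ((j, true) ∈ Emap vh x) ↔ x j = some (!(vh j)) := by
  simp [Emap]

lemma Emap_mem_false {vh : Fin d → Bool} {x : Fin d → Option Bool} {j : Fin d} :
    ((j, false) ∈ Emap vh x) ↔ x j = none := by
  simp [Emap]

lemma Emap_notMem {vh : Fin d → Bool} {x : Fin d → Option Bool} {j : Fin d}
    (h1 : (j, true) ∉ Emap vh x) (h2 : (j, false) ∉ Emap vh x) : x j = some (vh j) := by
  cases hx : x j with
  | none => exact absurd (Emap_mem_false.mpr hx) h2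
  | some b =>
    by_cases hb : b = !(vh j)
    · exact absurd (Emap_mem_true.mpr (by rw [hx, hb])) h1
    · have hb2 : b = vh j := by revert hb; cases b <;> cases hvj : vh j <;> simp
      rw [hb2]

lemma Emap_snd_unique {vh : Fin d → Bool} {x : Fin d → Option Bool} :
    ∀ q ∈ Emap vh x, ∀ q' ∈ Emap vh x, q.1 = q'.1 → q = q' := by
  rintro ⟨j, b⟩ hq ⟨j', b'⟩ hq' (h : j = j')
  subst h
  cases b <;> cases b'
  · rfl
  · have ha := Emap_mem_false.mp hq
    have hb := Emap_mem_true.mp hq'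
    rw [ha] at hb
    exact absurd hb (by simp)
  · have ha := Emap_mem_false.mp hq'
    have hb := Emap_mem_true.mp hq
    rw [ha] at hb
    exact absurd hb (by simp)
  · rfl

noncomputable def decode (vh : Fin d → Bool) (A : Finset (Fin d × Bool)) :
    Fin d → Option Bool :=
  fun j => if (j, false) ∈ A then none else if (j, true) ∈ A then some (!(vh j)) else some (vh j)

lemma decode_Emap (vh : Fin d → Bool) (x : Fin d → Option Bool) :
    decode vh (Emap vh x) = x := by
  funext j
  unfold decode
  by_cases h2 : (j, false) ∈ Emap vh x
  · rw [if_pos h2, Emap_mem_false.mp h2]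
  · rw [if_neg h2]
    by_cases h1 : (j, true) ∈ Emap vh x
    · rw [if_pos h1, Emap_mem_true.mp h1]
    · rw [if_neg h1, Emap_notMem h1 h2]

lemma Emap_card_le {vh : Fin d → Bool} {v x : Fin d → Option Bool} {T : Finset (Fin d)} {r : ℕ}
    (hvh : ∀ j (b : Bool), v j = some b → vh j = b)
    (hvT : ∀ j, v j = none → j ∈ T) (hxT : ∀ j, x j = none → j ∈ T)
    (hp : pdist v x ≤ r) : (Emap vh x).card ≤ r + T.card := by
  classical
  have hsplit := Finset.filter_union_filter_not_eq (fun q : Fin d × Bool => q.1 ∈ T) (Emap vh x)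
  have h1 : ((Emap vh x).filter (fun q => q.1 ∈ T)).card ≤ T.card := by
    apply Finset.card_le_card_of_injOn (fun q => q.1)
    · intro q hq; exact (Finset.mem_filter.mp hq).2
    · intro q hq q' hq' hqq'
      exact Emap_snd_unique q (Finset.mem_filter.mp hq).1 q' (Finset.mem_filter.mp hq').1 hqq'
  have h2 : ((Emap vh x).filter (fun q => q.1 ∉ T)).card ≤ pdist v x := by
    rw [pdist]
    apply Finset.card_le_card_of_injOn (fun q => q.1)
    · intro q hq
      obtain ⟨hqE, hqT⟩ := Finset.mem_filter.mp hq
      rcases (Finset.mem_filter.mp hqE).2 with ⟨_, hx1⟩ | ⟨_, hx1⟩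
      · cases hv : v q.1 with
        | none => exact absurd (hvT _ hv) hqT
        | some a =>
          refine Finset.mem_filter.mpr ⟨Finset.mem_univ _, a, !(vh q.1), hv, hx1, ?_⟩
          rw [hvh _ _ hv]; simp
      · exact absurd (hxT _ hx1) hqT
    · intro q hq q' hq' hqq'
      exact Emap_snd_unique q (Finset.mem_filter.mp hq).1 q' (Finset.mem_filter.mp hq').1 hqq'
  calc (Emap vh x).card = ((Emap vh x).filter (fun q => q.1 ∈ T)).card
        + ((Emap vh x).filter (fun q => q.1 ∉ T)).card := by
        rw [← Finset.card_union_of_disjoint (Finset.disjoint_filter_filter_not _ _ _), hsplit]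
    _ ≤ T.card + pdist v x := Nat.add_le_add h1 h2
    _ ≤ r + T.card := by omega

lemma key_bound {d : ℕ} (k r : ℕ) (T : Finset (Fin d)) (R M' : Multiset (Fin d → Option Bool))
    (hR : R ≤ M')
    (hknown : ∀ x ∈ M', x ∉ R → ∀ i, x i = none → i ∈ T)
    (hns : ¬Solv k r M')
    (hmin : ∀ W, R ≤ W → W ≤ M' → ¬Solv k r W → Multiset.card M' ≤ Multiset.card W)
    (v : Fin d → Option Bool) (hvT : ∀ i, v i = none → i ∈ T) :
    Multiset.card (M'.filter fun x => x ∉ R ∧ pdist v x ≤ r) ≤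
      2 ^ T.card * (∑ t ∈ Finset.Icc 1 (r + T.card),
        Nat.factorial t * (2 ^ T.card * k * (r + t + T.card) + 2) ^ t) + 1 := by
  classical
  set B := 2 ^ T.card * (∑ t ∈ Finset.Icc 1 (r + T.card),
        Nat.factorial t * (2 ^ T.card * k * (r + t + T.card) + 2) ^ t) + 1 with hBdef
  set F := M'.filter (fun x => x ∉ R ∧ pdist v x ≤ r) with hFdef
  have hFmem : ∀ x ∈ F, x ∈ M' ∧ x ∉ R ∧ pdist v x ≤ r := by
    intro x hx
    have h := Multiset.mem_filter.mp hx
    exact ⟨h.1, h.2⟩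
  have hsolv_erase : ∀ x ∈ M', x ∉ R → Solv k r (M'.erase x) := by
    intro x hxM hxR
    by_contra hns2
    have hRle : R ≤ M'.erase x := by
      rw [Multiset.le_iff_count]
      intro y
      by_cases hxy : y = x
      · subst hxy
        simp [Multiset.count_eq_zero_of_notMem hxR]
      · rw [Multiset.count_erase_of_ne hxy]
        exact Multiset.le_iff_count.mp hR y
    have hle := hmin _ hRle (Multiset.erase_le _ _) hns2
    have hc := Multiset.card_erase_of_mem hxM
    rw [Nat.pred_eq_sub_one] at hc
    have hpos : 0 < Multiset.card M' := Multiset.card_pos_iff_exists_mem.mpr ⟨x, hxM⟩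
    omega
  have hcount : ∀ x ∈ F, M'.count x = 1 := by
    intro x hx
    obtain ⟨hxM, hxR, _⟩ := hFmem x hx
    by_contra hc
    have h1 : 0 < M'.count x := Multiset.count_pos.mpr hxM
    have hxW : x ∈ M'.erase x := by
      rw [← Multiset.count_pos, Multiset.count_erase_self]
      omega
    have hsolv2 := solv_cons_mem hxW (hsolv_erase x hxM hxR)
    rw [Multiset.cons_erase hxM] at hsolv2
    exact hns hsolv2
  have hnodup : F.Nodup := by
    rw [Multiset.nodup_iff_count_le_one]
    intro x
    by_cases hx : x ∈ F
    · calc F.count x ≤ M'.count x := Multiset.count_le_of_le x (Multiset.filter_le _ _)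
        _ = 1 := hcount x hx
    · rw [Multiset.count_eq_zero_of_notMem hx]
      omega
  by_contra hbig
  push_neg at hbig
  set V := F.toFinset with hVdef
  have hVcard : V.card = Multiset.card F := Multiset.toFinset_card_eq_card_iff_nodup.mpr hnodup
  have hVB : B < V.card := by rw [hVcard]; exact hbig
  have hVmem : ∀ x ∈ V, x ∈ M' ∧ x ∉ R ∧ pdist v x ≤ r := fun x hx =>
    hFmem x (Multiset.mem_toFinset.mp hx)
  have hVT : ∀ x, x ∈ V → ∀ i, x i = none → i ∈ T := by
    intro x hx i hi
    obtain ⟨h1, h2, _⟩ := hVmem x hx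
    exact hknown x h1 h2 i hi
  rcases Nat.eq_zero_or_pos k with hk0 | hkpos
  · -- k = 0 : any solvable multiset is empty
    have hB1 : 1 ≤ B := by rw [hBdef]; omega
    have h2 : 1 < V.card := by omega
    obtain ⟨x₁, hx₁, x₂, hx₂, hne⟩ := Finset.one_lt_card.mp h2
    obtain ⟨Mc, hcomp, P, hPk, hPj, hPd⟩ :=
      hsolv_erase x₁ (hVmem x₁ hx₁).1 (hVmem x₁ hx₁).2.1
    rw [hk0, Nat.le_zero, Multiset.card_eq_zero] at hPk
    subst hPk
    have hMc : Mc = 0 := by rw [← hPj]; simp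
    subst hMc
    have hz : M'.erase x₁ = 0 := by
      rw [IsCompletion] at hcomp
      exact Multiset.rel_zero_right.mp hcomp
    have hx₂M : x₂ ∈ M'.erase x₁ := by
      rw [← Multiset.count_pos, Multiset.count_erase_of_ne hne.symm]
      exact Multiset.count_pos.mpr (hVmem x₂ hx₂).1
    rw [hz] at hx₂M
    simp at hx₂M
  -- main case : k ≥ 1
  set s := r + T.card with hsdef
  set vh : Fin d → Bool := fun j => (v j).getD false with hvhdef
  have hvh : ∀ j (b : Bool), v j = some b → vh j = b := by
    intro j b hj
    rw [hvhdef]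
    simp [hj]
  set 𝒲 := V.image (Emap vh) with h𝒲def
  have h𝒲card : 𝒲.card = V.card := by
    apply Finset.card_image_of_injOn
    intro x _ y _ hxy
    have h := congrArg (decode vh) hxy
    rwa [decode_Emap, decode_Emap] at h
  have h𝒲size : ∀ A ∈ 𝒲, A.card ≤ s := by
    intro A hA
    obtain ⟨x, hx, rfl⟩ := Finset.mem_image.mp hA
    exact Emap_card_le hvh hvT (hVT x hx) (hVmem x hx).2.2
  have hfibsum : 𝒲.card = ∑ n ∈ Finset.range (s+1), (𝒲.filter (fun A => A.card = n)).card :=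
    Finset.card_eq_sum_card_fiberwise (fun A hA => Finset.mem_range.mpr (by
      have := h𝒲size A hA; omega))
  have hfib0 : (𝒲.filter (fun A => A.card = 0)).card ≤ 1 := by
    apply Finset.card_le_one.mpr
    intro a ha b hb
    rw [Finset.card_eq_zero.mp (Finset.mem_filter.mp ha).2,
      Finset.card_eq_zero.mp (Finset.mem_filter.mp hb).2]
  have hrange : Finset.range (s+1) = insert 0 (Finset.Icc 1 s) := by
    ext n
    simp only [Finset.mem_range, Finset.mem_insert, Finset.mem_Icc]
    omega
  have hex : ∃ t ∈ Finset.Icc 1 s,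
      2 ^ T.card * (Nat.factorial t * (2 ^ T.card * k * (r + t + T.card) + 2) ^ t)
        < (𝒲.filter (fun A => A.card = t)).card := by
    by_contra hcon
    push_neg at hcon
    have hsum : 𝒲.card ≤ 1 + ∑ t ∈ Finset.Icc 1 s,
        2 ^ T.card * (Nat.factorial t * (2 ^ T.card * k * (r + t + T.card) + 2) ^ t) := by
      rw [hfibsum, hrange, Finset.sum_insert (by simp)]
      exact Nat.add_le_add hfib0 (Finset.sum_le_sum hcon)
    rw [← Finset.mul_sum] at hsum
    rw [h𝒲card] at hsum
    rw [hBdef] at hVB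
    omega
  obtain ⟨t, htmem, htbig⟩ := hex
  obtain ⟨ht1, hts⟩ := Finset.mem_Icc.mp htmem
  set Qt := 2 ^ T.card * k * (r + t + T.card) + 2 with hQtdef
  have hQle : Nat.factorial t * Qt ^ t ≤ 2 ^ T.card * (Nat.factorial t * Qt ^ t) :=
    Nat.le_mul_of_pos_left _ (pow_pos (by norm_num) _)
  obtain ⟨𝒮, h𝒮sub, h𝒮card, Y, hY⟩ := sunflower_exists t Qt (𝒲.filter (fun A => A.card = t))
    (fun A hA => (Finset.mem_filter.mp hA).2) (lt_of_le_of_lt hQle htbig)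
  have h𝒮sets : ∀ A ∈ 𝒮, A.card = t := fun A hA => (Finset.mem_filter.mp (h𝒮sub hA)).2
  have h𝒮𝒲 : ∀ A ∈ 𝒮, A ∈ 𝒲 := fun A hA => (Finset.mem_filter.mp (h𝒮sub hA)).1
  have hdecV : ∀ A ∈ 𝒮, decode vh A ∈ V ∧ Emap vh (decode vh A) = A := by
    intro A hA
    obtain ⟨x, hx, rfl⟩ := Finset.mem_image.mp (h𝒮𝒲 A hA)
    rw [decode_Emap]
    exact ⟨hx, rfl⟩
  have h𝒮2 : 2 ≤ 𝒮.card := by rw [h𝒮card]; omega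
  have hYsub : ∀ A ∈ 𝒮, Y ⊆ A := by
    intro A hA
    obtain ⟨B, hB, hBA⟩ := Finset.exists_mem_ne (show 1 < 𝒮.card by omega) A
    rw [← hY B hB A hA hBA]
    exact Finset.inter_subset_right
  have hYcard_lt : Y.card < t := by
    obtain ⟨A, hA, B, hB, hAB⟩ := Finset.one_lt_card.mp (by omega : 1 < 𝒮.card)
    have h1 : Y ⊆ A := hYsub A hA
    rcases Nat.lt_or_ge Y.card t with h | h
    · exact h
    · exfalso
      have hYA : Y = A := Finset.eq_of_subset_of_card_le h1 (by rw [h𝒮sets A hA]; omega)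
      have hint := hY A hA B hB hAB
      have hAB' : A ⊆ B := by
        intro x hx
        have hx2 : x ∈ A ∩ B := by rw [hint, hYA]; exact hx
        exact (Finset.mem_inter.mp hx2).2
      exact hAB (Finset.eq_of_subset_of_card_le hAB'
        (by rw [h𝒮sets A hA, h𝒮sets B hB]))
  set pureS := 𝒮.filter (fun A => ∀ q ∈ A \ Y, q.1 ∉ T) with hpureSdef
  have himpure : (𝒮 \ pureS).card ≤ T.card * 2 := by
    have h1 : ∀ A ∈ 𝒮 \ pureS, ∃ q, q ∈ A \ Y ∧ q.1 ∈ T := by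
      intro A hA
      obtain ⟨hA𝒮, hAn⟩ := Finset.mem_sdiff.mp hA
      rw [hpureSdef, Finset.mem_filter] at hAn
      push_neg at hAn
      obtain ⟨q, hq1, hq2⟩ := hAn hA𝒮
      exact ⟨q, hq1, hq2⟩
    have hsub2 : 𝒮 \ pureS ⊆ (T ×ˢ (Finset.univ : Finset Bool)).biUnion
        (fun q => (𝒮 \ pureS).filter (fun A => q ∈ A \ Y)) := by
      intro A hA
      obtain ⟨q, hq1, hq2⟩ := h1 A hA
      exact Finset.mem_biUnion.mpr ⟨q, Finset.mem_product.mpr ⟨hq2, Finset.mem_univ _⟩,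
        Finset.mem_filter.mpr ⟨hA, hq1⟩⟩
    have hone : ∀ q : Fin d × Bool, ((𝒮 \ pureS).filter (fun A => q ∈ A \ Y)).card ≤ 1 := by
      intro q
      apply Finset.card_le_one.mpr
      intro A hA A' hA'
      by_contra hne
      have hqA := (Finset.mem_filter.mp hA).2
      have hqA' := (Finset.mem_filter.mp hA').2
      have hYint := hY A (Finset.mem_sdiff.mp (Finset.mem_filter.mp hA).1).1
        A' (Finset.mem_sdiff.mp (Finset.mem_filter.mp hA').1).1 hne
      have hqY : q ∈ Y := by
        rw [← hYint]
        exact Finset.mem_inter.mpr ⟨(Finset.mem_sdiff.mp hqA).1, (Finset.mem_sdiff.mp hqA').1⟩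
      exact (Finset.mem_sdiff.mp hqA).2 hqY
    calc (𝒮 \ pureS).card
        ≤ ((T ×ˢ (Finset.univ : Finset Bool)).biUnion
            (fun q => (𝒮 \ pureS).filter (fun A => q ∈ A \ Y))).card :=
          Finset.card_le_card hsub2
      _ ≤ ∑ q ∈ T ×ˢ (Finset.univ : Finset Bool),
            ((𝒮 \ pureS).filter (fun A => q ∈ A \ Y)).card := Finset.card_biUnion_le
      _ ≤ ∑ _q ∈ T ×ˢ (Finset.univ : Finset Bool), 1 :=
          Finset.sum_le_sum (fun q _ => hone q)
      _ = T.card * 2 := by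
          rw [Finset.sum_const, smul_eq_mul, Finset.card_product]
          simp
  have hpureSsub : pureS ⊆ 𝒮 := Finset.filter_subset _ _
  have hpure_card : 2 ^ T.card * k * (r + t) + 3 ≤ pureS.card := by
    have hsd : (𝒮 \ pureS).card = 𝒮.card - pureS.card := Finset.card_sdiff_of_subset hpureSsub
    have hps : pureS.card ≤ 𝒮.card := Finset.card_le_card hpureSsub
    have hQsplit : Qt = 2 ^ T.card * k * (r + t) + 2 ^ T.card * k * T.card + 2 := by
      rw [hQtdef]; ring
    have haux : 2 * T.card ≤ 2 ^ T.card * k * T.card := by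
      rcases Nat.eq_zero_or_pos T.card with h | h
      · simp [h]
      · have h2 : 2 ≤ 2 ^ T.card := by
          calc 2 = 2 ^ 1 := rfl
            _ ≤ 2 ^ T.card := Nat.pow_le_pow_right (by norm_num) h
        have h3 : 2 ≤ 2 ^ T.card * k := by
          calc 2 ≤ 2 ^ T.card := h2
            _ = 2 ^ T.card * 1 := (mul_one _).symm
            _ ≤ 2 ^ T.card * k := Nat.mul_le_mul_left _ hkpos
        exact Nat.mul_le_mul_right _ h3
    omega
  obtain ⟨A₀, hA₀pure⟩ := Finset.card_pos.mp (show 0 < pureS.card by omega)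
  set x₀ := decode vh A₀ with hx₀def
  have hA₀𝒮 : A₀ ∈ 𝒮 := hpureSsub hA₀pure
  have hx₀V : x₀ ∈ V := (hdecV A₀ hA₀𝒮).1
  have hx₀E : Emap vh x₀ = A₀ := (hdecV A₀ hA₀𝒮).2
  have hx₀M : x₀ ∈ M' := (hVmem x₀ hx₀V).1
  have hx₀R : x₀ ∉ R := (hVmem x₀ hx₀V).2.1
  obtain ⟨Mc, hcomp, P, hPk, hPj, hPd⟩ := hsolv_erase x₀ hx₀M hx₀R
  set S' := pureS.erase A₀ with hS'def
  have hS'card : 2 ^ T.card * k * (r + t) + 2 ≤ S'.card := by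
    rw [hS'def, Finset.card_erase_of_mem hA₀pure]
    omega
  have hS'pure : ∀ A ∈ S', A ∈ pureS := fun A hA => Finset.mem_of_mem_erase hA
  have hS'𝒮 : ∀ A ∈ S', A ∈ 𝒮 := fun A hA => hpureSsub (hS'pure A hA)
  have hS'ne : ∀ A ∈ S', A ≠ A₀ := fun A hA => Finset.ne_of_mem_erase hA
  have hdec_ne : ∀ A ∈ S', decode vh A ≠ x₀ := by
    intro A hA hcon
    exact hS'ne A hA (by rw [← (hdecV A (hS'𝒮 A hA)).2, hcon, hx₀E])
  have hvecM'' : ∀ A ∈ S', decode vh A ∈ M'.erase x₀ := by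
    intro A hA
    rw [← Multiset.count_pos, Multiset.count_erase_of_ne (hdec_ne A hA)]
    exact Multiset.count_pos.mpr (hVmem _ (hdecV A (hS'𝒮 A hA)).1).1
  have hcomp' : ∀ A, A ∈ S' → ∃ c : Fin d → Bool,
      (∀ i (b : Bool), decode vh A i = some b → c i = b) ∧ ∃ p ∈ P, c ∈ p := by
    intro A hA
    obtain ⟨c, hcMc, hc⟩ := completion_mem hcomp (hvecM'' A hA)
    rw [← hPj] at hcMc
    obtain ⟨p, hp, hcp⟩ := Multiset.mem_join.mp hcMc
    exact ⟨c, hc, p, hp, hcp⟩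
  choose cA hcA pA hpAP hcpA using hcomp'
  set f : Finset (Fin d × Bool) → Multiset (Fin d → Bool) × Finset (Fin d) :=
    fun A => if h : A ∈ S' then (pA A h, T.filter (fun j => cA A h j = true)) else (0, ∅)
    with hfdef
  have hmapsto : ∀ A ∈ S', f A ∈ P.toFinset ×ˢ T.powerset := by
    intro A hA
    rw [hfdef]
    dsimp only
    rw [dif_pos hA]
    exact Finset.mem_product.mpr ⟨Multiset.mem_toFinset.mpr (hpAP A hA),
      Finset.mem_powerset.mpr (Finset.filter_subset _ _)⟩
  have htgt : (P.toFinset ×ˢ T.powerset).card * (r + t) < S'.card := by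
    have h1 : (P.toFinset ×ˢ T.powerset).card ≤ k * 2 ^ T.card := by
      rw [Finset.card_product, Finset.card_powerset]
      exact Nat.mul_le_mul (le_trans (Multiset.toFinset_card_le _) hPk) (le_refl _)
    calc (P.toFinset ×ˢ T.powerset).card * (r+t)
        ≤ k * 2 ^ T.card * (r+t) := Nat.mul_le_mul_right _ h1
      _ = 2 ^ T.card * k * (r + t) := by ring
      _ < S'.card := by omega
  obtain ⟨⟨C, σ⟩, hCσ, hIcard⟩ :=
    Finset.exists_lt_card_fiber_of_mul_lt_card_of_maps_to hmapsto htgt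
  set I := S'.filter (fun A => f A = (C, σ)) with hIdef
  have hCP : C ∈ P := Multiset.mem_toFinset.mp (Finset.mem_product.mp hCσ).1
  have hIS' : ∀ A ∈ I, A ∈ S' := fun A hA => (Finset.mem_filter.mp hA).1
  have hIf : ∀ A (hA : A ∈ I), pA A (hIS' A hA) = C ∧
      T.filter (fun j => cA A (hIS' A hA) j = true) = σ := by
    intro A hA
    have h := (Finset.mem_filter.mp hA).2
    rw [hfdef] at h
    dsimp only at h
    rw [dif_pos (hIS' A hA)] at h
    exact ⟨congrArg Prod.fst h, congrArg Prod.snd h⟩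
  have hcC : ∀ A (hA : A ∈ I), cA A (hIS' A hA) ∈ C := by
    intro A hA
    rw [← (hIf A hA).1]
    exact hcpA A (hIS' A hA)
  have hcT : ∀ A (hA : A ∈ I), ∀ j ∈ T, (cA A (hIS' A hA) j = true ↔ j ∈ σ) := by
    intro A hA j hj
    constructor
    · intro h
      rw [← (hIf A hA).2]
      exact Finset.mem_filter.mpr ⟨hj, h⟩
    · intro h
      rw [← (hIf A hA).2] at h
      exact (Finset.mem_filter.mp h).2
  set PC : Finset (Fin d × Bool) → Finset (Fin d) := fun A => (A \ Y).image Prod.fst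
    with hPCdef
  have hmemE : ∀ A ∈ 𝒮, ∀ j : Fin d,
      (((j, true) ∈ A) ↔ decode vh A j = some (!(vh j)))
      ∧ (((j, false) ∈ A) ↔ decode vh A j = none) := by
    intro A hA j
    have hE := (hdecV A hA).2
    constructor
    · have h1 : ((j, true) ∈ Emap vh (decode vh A)) ↔ decode vh A j = some (!(vh j)) :=
        Emap_mem_true
      rwa [hE] at h1
    · have h1 : ((j, false) ∈ Emap vh (decode vh A)) ↔ decode vh A j = none :=
        Emap_mem_false
      rwa [hE] at h1
  have hPCmem : ∀ A ∈ pureS, ∀ j ∈ PC A, j ∉ T ∧ (j, true) ∈ A \ Y := by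
    intro A hApure j hj
    have hA𝒮 : A ∈ 𝒮 := hpureSsub hApure
    have hpure := (Finset.mem_filter.mp hApure).2
    obtain ⟨q, hqAY, hqj⟩ := Finset.mem_image.mp hj
    have hjT : q.1 ∉ T := hpure q hqAY
    have hq' : (q.1, q.2) ∈ A \ Y := by simpa using hqAY
    rcases Bool.eq_false_or_eq_true q.2 with h2 | h2
    · rw [h2] at hq'
      rw [← hqj]
      exact ⟨hjT, hq'⟩
    · exfalso
      rw [h2] at hq'
      have hnone := ((hmemE A hA𝒮 q.1).2).mp (Finset.mem_sdiff.mp hq').1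
      exact hjT (hVT _ (hdecV A hA𝒮).1 _ hnone)
  have hPCmem' : ∀ A : Finset (Fin d × Bool), ∀ j : Fin d, (j, true) ∈ A \ Y → j ∈ PC A :=
    fun A j h => Finset.mem_image.mpr ⟨(j, true), h, rfl⟩
  have hPCdisj : ∀ A ∈ pureS, ∀ B ∈ pureS, A ≠ B → ∀ j, j ∈ PC A → j ∈ PC B → False := by
    intro A hA B hB hne j hjA hjB
    have h1 := (hPCmem A hA j hjA).2
    have h2 := (hPCmem B hB j hjB).2
    have hYj : (j, true) ∈ Y := by
      rw [← hY A (hpureSsub hA) B (hpureSsub hB) hne]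
      exact Finset.mem_inter.mpr ⟨(Finset.mem_sdiff.mp h1).1, (Finset.mem_sdiff.mp h2).1⟩
    exact (Finset.mem_sdiff.mp h1).2 hYj
  have hPCcard : ∀ A ∈ pureS, (PC A).card = t - Y.card := by
    intro A hApure
    have hA𝒮 : A ∈ 𝒮 := hpureSsub hApure
    have hE := (hdecV A hA𝒮).2
    rw [hPCdef]
    dsimp only
    rw [Finset.card_image_of_injOn, Finset.card_sdiff_of_subset (hYsub A hA𝒮), h𝒮sets A hA𝒮]
    intro q hq q' hq' hqq'
    have hqA : q ∈ A := (Finset.mem_sdiff.mp (by exact hq)).1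
    have hq'A : q' ∈ A := (Finset.mem_sdiff.mp (by exact hq')).1
    rw [← hE] at hqA hq'A
    exact Emap_snd_unique q hqA q' hq'A hqq'
  have hmemY : ∀ A ∈ pureS, ∀ j, ∀ b : Bool, j ∉ PC A → (j, b) ∈ A → (j, b) ∈ Y := by
    intro A hApure j b hjPC hjA
    have hA𝒮 : A ∈ 𝒮 := hpureSsub hApure
    have hpure := (Finset.mem_filter.mp hApure).2
    by_contra hYn
    have hmem : (j, b) ∈ A \ Y := Finset.mem_sdiff.mpr ⟨hjA, hYn⟩
    cases b with
    | false =>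
      have hnone := ((hmemE A hA𝒮 j).2).mp hjA
      exact (hpure _ hmem) (hVT _ (hdecV A hA𝒮).1 _ hnone)
    | true => exact hjPC (hPCmem' A j hmem)
  have hdec_agree : ∀ A ∈ pureS, ∀ B ∈ pureS, ∀ j, j ∉ PC A → j ∉ PC B →
      decode vh A j = decode vh B j := by
    intro A hA B hB j hjA hjB
    have hA𝒮 : A ∈ 𝒮 := hpureSsub hA
    have hB𝒮 : B ∈ 𝒮 := hpureSsub hB
    unfold decode
    by_cases h5 : (j, false) ∈ Y
    · rw [if_pos (hYsub A hA𝒮 h5), if_pos (hYsub B hB𝒮 h5)]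
    · rw [if_neg (fun hc => h5 (hmemY A hA j false hjA hc)),
        if_neg (fun hc => h5 (hmemY B hB j false hjB hc))]
      by_cases h6 : (j, true) ∈ Y
      · rw [if_pos (hYsub A hA𝒮 h6), if_pos (hYsub B hB𝒮 h6)]
      · rw [if_neg (fun hc => h6 (hmemY A hA j true hjA hc)),
          if_neg (fun hc => h6 (hmemY B hB j true hjB hc))]
  have hc_agree : ∀ A, ∀ hA : A ∈ I, ∀ B, ∀ hB : B ∈ I, ∀ j, j ∉ PC A → j ∉ PC B →
      cA A (hIS' A hA) j = cA B (hIS' B hB) j := by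
    intro A hA B hB j hjA hjB
    have hdA := hdec_agree A (hS'pure _ (hIS' A hA)) B (hS'pure _ (hIS' B hB)) j hjA hjB
    cases hd : decode vh A j with
    | some b =>
      have hd' : decode vh B j = some b := by rw [← hdA, hd]
      rw [hcA A _ j b hd, hcA B _ j b hd']
    | none =>
      have hjT : j ∈ T := hVT _ (hdecV A (hS'𝒮 _ (hIS' A hA))).1 j hd
      have h1 := hcT A hA j hjT
      have h2 := hcT B hB j hjT
      have h3 : (cA A (hIS' A hA) j = true) ↔ (cA B (hIS' B hB) j = true) :=
        h1.trans h2.symm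
      cases hbA : cA A (hIS' A hA) j <;> cases hbB : cA B (hIS' B hB) j <;>
        simp [hbA, hbB] at h3 ⊢
  have hcross : ∀ A ∈ 𝒮, ∀ B ∈ pureS, A ≠ B → ∀ j ∈ PC B,
      decode vh A j = some (vh j) := by
    intro A hA𝒮 B hBpure hne j hj
    obtain ⟨hjT, hjBY⟩ := hPCmem B hBpure j hj
    have hEA : Emap vh (decode vh A) = A := (hdecV A hA𝒮).2
    refine Emap_notMem ?_ ?_
    · rw [hEA]
      intro hc
      have hYj : (j, true) ∈ Y := by
        rw [← hY A hA𝒮 B (hpureSsub hBpure) hne]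
        exact Finset.mem_inter.mpr ⟨hc, (Finset.mem_sdiff.mp hjBY).1⟩
      exact (Finset.mem_sdiff.mp hjBY).2 hYj
    · rw [hEA]
      intro hc
      exact hjT (hVT _ (hdecV A hA𝒮).1 j (((hmemE A hA𝒮 j).2).mp hc))
  have hpetal_c : ∀ A, ∀ hA : A ∈ I, ∀ j ∈ PC A, cA A (hIS' A hA) j = !(vh j) := by
    intro A hA j hj
    have h := hPCmem A (hS'pure _ (hIS' A hA)) j hj
    have hval : decode vh A j = some (!(vh j)) :=
      ((hmemE A (hS'𝒮 _ (hIS' A hA)) j).1).mp (Finset.mem_sdiff.mp h.2).1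
    exact hcA A _ j _ hval
  have hcross_c : ∀ A, ∀ hA : A ∈ I, ∀ B ∈ pureS, A ≠ B → ∀ j ∈ PC B,
      cA A (hIS' A hA) j = vh j := by
    intro A hA B hB hne j hj
    exact hcA A _ j _ (hcross A (hS'𝒮 _ (hIS' A hA)) B hB hne j hj)
  have hIpos : 0 < I.card := by omega
  obtain ⟨B₁, hB₁⟩ := Finset.card_pos.mp hIpos
  set c₀ : Fin d → Bool := fun j =>
    if j ∈ PC A₀ then !(vh j) else if j ∈ PC B₁ then vh j else cA B₁ (hIS' B₁ hB₁) j
    with hc₀def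
  have hA₀ne : ∀ A ∈ I, A₀ ≠ A := fun A hA h => hS'ne A (hIS' A hA) h.symm
  have hB₁pure : B₁ ∈ pureS := hS'pure _ (hIS' B₁ hB₁)
  have hcompl₀ : ∀ i (b : Bool), x₀ i = some b → c₀ i = b := by
    intro j b hjb
    rw [hx₀def] at hjb
    rw [hc₀def]
    dsimp only
    by_cases h1 : j ∈ PC A₀
    · rw [if_pos h1]
      have hval : decode vh A₀ j = some (!(vh j)) :=
        ((hmemE A₀ hA₀𝒮 j).1).mp (Finset.mem_sdiff.mp (hPCmem A₀ hA₀pure j h1).2).1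
      rw [hjb] at hval
      exact (Option.some.inj hval).symm
    · rw [if_neg h1]
      by_cases h2 : j ∈ PC B₁
      · rw [if_pos h2]
        have hval := hcross A₀ hA₀𝒮 B₁ hB₁pure (hA₀ne B₁ hB₁) j h2
        rw [hjb] at hval
        exact (Option.some.inj hval).symm
      · rw [if_neg h2]
        have hag := hdec_agree A₀ hA₀pure B₁ hB₁pure j h1 h2
        exact hcA B₁ _ j b (by rw [← hag]; exact hjb)
  have hclose : ∀ z ∈ C, hammingDist c₀ z ≤ r := by
    intro z hz
    have hBstar : ∃ Bs, ∃ hBs : Bs ∈ I, ∀ j ∈ PC Bs, z j = vh j := by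
      by_contra hcon
      push_neg at hcon
      have hPCne : (PC B₁).Nonempty := by
        rw [← Finset.card_pos, hPCcard B₁ hB₁pure]
        omega
      obtain ⟨j₀, _⟩ := hPCne
      set wit : Finset (Fin d × Bool) → Fin d := fun A =>
        if h : ∃ j ∈ PC A, z j ≠ vh j then h.choose else j₀ with hwitdef
      have hwith : ∀ A ∈ I, ∃ j ∈ PC A, z j ≠ vh j := by
        intro A hA
        obtain ⟨j, hj1, hj2⟩ := hcon A hA
        exact ⟨j, hj1, hj2⟩
      have hwitPC : ∀ A ∈ I, wit A ∈ PC A ∧ z (wit A) ≠ vh (wit A) := by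
        intro A hA
        rw [hwitdef]
        dsimp only
        rw [dif_pos (hwith A hA)]
        obtain ⟨h1, h2⟩ := (hwith A hA).choose_spec
        exact ⟨h1, h2⟩
      set Ds₁ := Finset.univ.filter (fun i => cA B₁ (hIS' B₁ hB₁) i ≠ z i) with hDs₁def
      have hcard1 : (I.erase B₁).card ≤ Ds₁.card := by
        apply Finset.card_le_card_of_injOn wit
        · intro A hA
          have hAI : A ∈ I := Finset.mem_of_mem_erase hA
          have hAB₁ : A ≠ B₁ := Finset.ne_of_mem_erase hA
          obtain ⟨hw1, hw2⟩ := hwitPC A hAI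
          have hc1 : cA B₁ (hIS' B₁ hB₁) (wit A) = vh (wit A) :=
            hcross_c B₁ hB₁ A (hS'pure _ (hIS' A hAI)) (fun h => hAB₁ h.symm) (wit A) hw1
          refine Finset.mem_filter.mpr ⟨Finset.mem_univ _, ?_⟩
          rw [hc1]
          exact fun h => hw2 h.symm
        · intro A hA A' hA' hAA'
          by_contra hne
          have hAI := Finset.mem_of_mem_erase hA
          have hA'I := Finset.mem_of_mem_erase hA'
          exact hPCdisj A (hS'pure _ (hIS' A hAI)) A' (hS'pure _ (hIS' A' hA'I)) hne
            (wit A) (hwitPC A hAI).1 (hAA' ▸ (hwitPC A' hA'I).1)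
      have hcard2 : Ds₁.card ≤ r := by
        have := hPd C hCP (cA B₁ (hIS' B₁ hB₁)) (hcC B₁ hB₁) z hz
        rwa [hammingDist] at this
      rw [Finset.card_erase_of_mem hB₁] at hcard1
      omega
    obtain ⟨Bs, hBs, hzBs⟩ := hBstar
    have hBspure : Bs ∈ pureS := hS'pure _ (hIS' Bs hBs)
    set cs := cA Bs (hIS' Bs hBs) with hcsdef
    have hcsC : cs ∈ C := hcC Bs hBs
    set D0 := Finset.univ.filter (fun i => c₀ i ≠ z i) with hD0def
    set Ds := Finset.univ.filter (fun i => cs i ≠ z i) with hDsdef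
    have hPCBsDs : PC Bs ⊆ Ds := by
      intro j hj
      refine Finset.mem_filter.mpr ⟨Finset.mem_univ _, ?_⟩
      rw [hcsdef, hpetal_c Bs hBs j hj, hzBs j hj]
      simp
    have hD0sub : D0 ⊆ (Ds \ PC Bs) ∪ PC A₀ := by
      intro j hj
      have hjne : c₀ j ≠ z j := (Finset.mem_filter.mp hj).2
      by_cases h1 : j ∈ PC A₀
      · exact Finset.mem_union_right _ h1
      have hjBs : j ∉ PC Bs := by
        intro hjBs
        apply hjne
        rw [hc₀def]
        dsimp only
        rw [if_neg h1]
        by_cases hBsB₁ : Bs = B₁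
        · subst hBsB₁
          rw [if_pos hjBs]
          exact (hzBs j hjBs).symm
        · have hjB₁ : j ∉ PC B₁ := fun hc =>
            hPCdisj Bs hBspure B₁ hB₁pure hBsB₁ j hjBs hc
          rw [if_neg hjB₁]
          rw [hcross_c B₁ hB₁ Bs hBspure (fun h => hBsB₁ h.symm) j hjBs]
          exact (hzBs j hjBs).symm
      have hcs_eq : cs j = c₀ j := by
        rw [hc₀def]
        dsimp only
        rw [if_neg h1]
        by_cases h2 : j ∈ PC B₁
        · rw [if_pos h2]
          by_cases hBsB₁ : Bs = B₁
          · exact absurd (hBsB₁ ▸ h2) hjBs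
          · exact hcross_c Bs hBs B₁ hB₁pure hBsB₁ j h2
        · rw [if_neg h2]
          exact (hc_agree B₁ hB₁ Bs hBs j h2 hjBs).symm
      refine Finset.mem_union_left _ (Finset.mem_sdiff.mpr ⟨?_, hjBs⟩)
      refine Finset.mem_filter.mpr ⟨Finset.mem_univ _, ?_⟩
      rw [hcs_eq]
      exact hjne
    have hcardPC : (PC A₀).card = (PC Bs).card := by
      rw [hPCcard A₀ hA₀pure, hPCcard Bs hBspure]
    have hDs_le : Ds.card ≤ r := by
      have := hPd C hCP cs hcsC z hz
      rwa [hammingDist] at this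
    have hfinal : hammingDist c₀ z = D0.card := by rw [hammingDist]
    calc hammingDist c₀ z = D0.card := hfinal
      _ ≤ ((Ds \ PC Bs) ∪ PC A₀).card := Finset.card_le_card hD0sub
      _ ≤ (Ds \ PC Bs).card + (PC A₀).card := Finset.card_union_le _ _
      _ = Ds.card - (PC Bs).card + (PC Bs).card := by
          rw [Finset.card_sdiff_of_subset hPCBsDs, hcardPC]
      _ = Ds.card := Nat.sub_add_cancel (Finset.card_le_card hPCBsDs)
      _ ≤ r := hDs_le
  have hx₀c₀ := solv_insert hcomp hPk hPj hPd hCP x₀ c₀ hcompl₀ hclose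
  rw [Multiset.cons_erase hx₀M] at hx₀c₀
  exact hns hx₀c₀

end Statement12

theorem statement_12 {d : ℕ} (k r : ℕ)
    (M R : Multiset (Fin d → Option Bool)) (T : Finset (Fin d))
    (hRM : R ≤ M)
    (hcover : ∀ v ∈ M, ∀ i : Fin d, v i = none → v ∈ R ∨ i ∈ T) :
    ∃ M' : Multiset (Fin d → Option Bool), M' ≤ M ∧ R ≤ M' ∧
      (∀ v ∈ M, v ∉ R →
        Multiset.card (M'.filter fun x => x ∉ R ∧ pdist v x ≤ r) ≤
          2 ^ T.card * (∑ t ∈ Finset.Icc 1 (r + T.card),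
            t.factorial * (2 ^ T.card * k * (r + t + T.card) + 2) ^ t) + 1) ∧
      ((∃ Mc : Multiset (Fin d → Bool), IsCompletion M Mc ∧ HasDiamPartitionM Mc k r) ↔
        (∃ Mc : Multiset (Fin d → Bool), IsCompletion M' Mc ∧ HasDiamPartitionM Mc k r)) := by
  classical
  by_cases hsolv : Statement12.Solv k r M
  · refine ⟨R, hRM, le_refl R, ?_, ?_⟩
    · intro v _hv _hvR
      have hzero : R.filter (fun x => x ∉ R ∧ pdist v x ≤ r) = 0 := by
        rw [Multiset.eq_zero_iff_forall_notMem]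
        intro x hx
        have h := Multiset.mem_filter.mp hx
        exact h.2.1 h.1
      rw [hzero]
      simp
    · have hRsolv : Statement12.Solv k r R := Statement12.Solv.mono hRM hsolv
      exact iff_of_true hsolv hRsolv
  · have hexists : ∃ n : ℕ, ∃ W : Multiset (Fin d → Option Bool),
        (R ≤ W ∧ W ≤ M ∧ ¬Statement12.Solv k r W) ∧ Multiset.card W = n :=
      ⟨Multiset.card M, M, ⟨hRM, le_refl M, hsolv⟩, rfl⟩
    obtain ⟨W, ⟨hRW, hWM, hWns⟩, hWcard⟩ := Nat.find_spec hexists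
    have hmin : ∀ W', R ≤ W' → W' ≤ W → ¬Statement12.Solv k r W' →
        Multiset.card W ≤ Multiset.card W' := by
      intro W' h1 h2 h3
      by_contra hlt
      push_neg at hlt
      have hlt2 : Multiset.card W' < Nat.find hexists := by omega
      exact Nat.find_min hexists hlt2 ⟨W', ⟨h1, h2.trans hWM, h3⟩, rfl⟩
    refine ⟨W, hWM, hRW, ?_, iff_of_false hsolv hWns⟩
    intro v hv hvR
    have hknown : ∀ x ∈ W, x ∉ R → ∀ i, x i = none → i ∈ T := by
      intro x hx hxR i hi
      rcases hcover x (Multiset.mem_of_le hWM hx) i hi with h | h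
      · exact absurd h hxR
      · exact h
    have hvT : ∀ i, v i = none → i ∈ T := by
      intro i hi
      rcases hcover v hv i hi with h | h
      · exact absurd h hvR
      · exact h
    exact Statement12.key_bound k r T R W hRW hknown hWns hmin v hvT
end

section
/- Let G be a simple graph with vertex set {v_1,…,v_n} and edge set {e_1,…,e_m}, and let x_1,…,x_n ∈ {0,…,n−1}. For each i ∈ [n], define a_i ∈ {0,1}^{m+n(n−1)} as follows: for j ∈ [m], a_i[j] = 1 iff v_i is incident to e_j; among the n−1 'private' coordinates m+(i−1)(n−1)+1, …, m+i(n−1) of v_i, exactly x_i are set to 1 in a_i; and all remaining coordinates of a_i are 0. Then: (i) a_i has exactly deg(v_i) + x_i coordinates equal to 1; and (ii) for i ≠ j, the Hamming distance δ(a_i, a_j) equals deg(v_i) + x_i + deg(v_j) + x_j − 2 if v_i and v_j are adjacent in G, and equals deg(v_i) + x_i + deg(v_j) + x_j if they are nonadjacent. -/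
/-!
The support of `a i` consists of the edge coordinates of the edges at `i` (there are `deg i`)
and `x i` coordinates of its private block. For `i ≠ j` the private blocks are disjoint, and the
only edge that can contain both `i` and `j` is `s(i, j)`, so the supports meet in one coordinate if
`i` and `j` are adjacent and in none otherwise; then `δ(f, g) = |f| + |g| - 2 |f ∧ g|`.
-/

open Finset

lemma Finset.card_filter_univ_sum {α β : Type*} [Fintype α] [Fintype β]
    (P : α ⊕ β → Prop) [DecidablePred P] :
    #{c | P c} = #{a | P (Sum.inl a)} + #{b | P (Sum.inr b)} := by
  rw [← card_disjSum]
  congr 1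
  ext (c | c) <;> simp

lemma Finset.card_filter_univ_prod_of_fst_eq {ι κ : Type*} [Fintype ι] [Fintype κ] [DecidableEq ι]
    {P : ι × κ → Prop} [DecidablePred P] {i : ι} (h : ∀ q, P q → q.1 = i) :
    #{q | P q} = #{p | P (i, p)} := by
  rw [← one_mul #{p | P (i, p)}, ← card_singleton i, ← card_product]
  congr 1
  ext ⟨i', p⟩
  simp only [mem_filter, mem_univ, true_and, mem_product, mem_singleton]
  exact ⟨fun hq => ⟨h _ hq, h _ hq ▸ hq⟩, fun ⟨rfl, hp⟩ => hp⟩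

lemma hammingDist_add_two_mul_card_filter_and {ι : Type*} [Fintype ι] (f g : ι → Bool) :
    hammingDist f g + 2 * #{c | f c = true ∧ g c = true} = #{c | f c = true} + #{c | g c = true} := by
  simp only [hammingDist, card_filter, mul_sum, ← sum_add_distrib]
  refine sum_congr rfl fun c _ => ?_
  cases f c <;> cases g c <;> rfl

namespace SimpleGraph

variable {V ι : Type*} [Fintype V] [Fintype ι] (G : SimpleGraph V) [DecidableRel G.Adj]

lemma card_filter_edgeEquiv (e : ι ≃ G.edgeSet) (P : Sym2 V → Prop) [DecidablePred P] :
    #{k | P (e k)} = #{f ∈ G.edgeFinset | P f} := by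
  refine card_bij' (fun k _ => (e k : Sym2 V))
    (fun f hf => e.symm ⟨f, mem_edgeFinset.mp (mem_filter.mp hf).1⟩) ?_ ?_ ?_ ?_ <;> simp

lemma card_filter_mem_edgeEquiv [DecidableEq V] (e : ι ≃ G.edgeSet) (v : V) :
    #{k | v ∈ (e k : Sym2 V)} = G.degree v := by
  rw [card_filter_edgeEquiv G e (v ∈ ·), ← incidenceFinset_eq_filter, card_incidenceFinset_eq_degree]

lemma card_filter_mem_and_mem_edgeEquiv [DecidableEq V] (e : ι ≃ G.edgeSet) {v w : V} (hvw : v ≠ w) :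
    #{k | v ∈ (e k : Sym2 V) ∧ w ∈ (e k : Sym2 V)} = if G.Adj v w then 1 else 0 := by
  rw [card_filter_edgeEquiv G e (fun f => v ∈ f ∧ w ∈ f)]
  simp_rw [Sym2.mem_and_mem_iff hvw, filter_eq', mem_edgeFinset, mem_edgeSet]
  split_ifs <;> rfl

end SimpleGraph

theorem statement_14_general {n m : ℕ} (G : SimpleGraph (Fin n)) [DecidableRel G.Adj]
    (e : Fin m ≃ G.edgeSet) (x : Fin n → ℕ)
    (a : Fin n → (Fin m ⊕ Fin n × Fin (n - 1)) → Bool)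
    (ha1 : ∀ i j, a i (Sum.inl j) = true ↔ i ∈ (e j).1)
    (ha2 : ∀ i i' p, a i (Sum.inr (i', p)) = true → i' = i)
    (ha3 : ∀ i, (Finset.univ.filter fun p : Fin (n - 1) =>
      a i (Sum.inr (i, p)) = true).card = x i) :
    (∀ i, (Finset.univ.filter fun c => a i c = true).card = G.degree i + x i) ∧
    (∀ i j, i ≠ j →
      hammingDist (a i) (a j) =
        if G.Adj i j then G.degree i + x i + (G.degree j + x j) - 2
        else G.degree i + x i + (G.degree j + x j)) := by
  have card_support (i : Fin n) : #{c | a i c = true} = G.degree i + x i := by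
    rw [card_filter_univ_sum, card_filter_univ_prod_of_fst_eq fun q => ha2 i q.1 q.2, ha3,
      ← G.card_filter_mem_edgeEquiv e]
    simp only [ha1]
  refine ⟨card_support, fun i j hij => ?_⟩
  have card_common : #{c | a i c = true ∧ a j c = true} = if G.Adj i j then 1 else 0 := by
    have no_common_private : #{q | a i (Sum.inr q) = true ∧ a j (Sum.inr q) = true} = 0 :=
      card_filter_eq_zero_iff.mpr fun q _ ⟨hi, hj⟩ => hij ((ha2 i _ _ hi).symm.trans (ha2 j _ _ hj))
    rw [card_filter_univ_sum, no_common_private, add_zero,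
      ← G.card_filter_mem_and_mem_edgeEquiv e hij]
    simp only [ha1]
  have hamming := hammingDist_add_two_mul_card_filter_and (a i) (a j)
  rw [card_support, card_support, card_common] at hamming
  split_ifs at hamming ⊢ <;> omega

theorem statement_14 {n m : ℕ} (G : SimpleGraph (Fin n)) [DecidableRel G.Adj]
    (e : Fin m ≃ G.edgeSet) (x : Fin n → ℕ) (hx : ∀ i, x i < n)
    (a : Fin n → (Fin m ⊕ Fin n × Fin (n - 1)) → Bool)
    (ha1 : ∀ i j, a i (Sum.inl j) = true ↔ i ∈ (e j).1)
    (ha2 : ∀ i i' p, a i (Sum.inr (i', p)) = true → i' = i)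
    (ha3 : ∀ i, (Finset.univ.filter fun p : Fin (n - 1) =>
      a i (Sum.inr (i, p)) = true).card = x i) :
    (∀ i, (Finset.univ.filter fun c => a i c = true).card = G.degree i + x i) ∧
    (∀ i j, i ≠ j →
      hammingDist (a i) (a j) =
        if G.Adj i j then G.degree i + x i + (G.degree j + x j) - 2
        else G.degree i + x i + (G.degree j + x j)) :=
  statement_14_general G e x a ha1 ha2 ha3
end

section
/- Let G be a finite simple graph with edge set {e_1,…,e_m} and fix a linear order < on V(G). For v ∈ V(G) define vec(v) ∈ {0,1,□}^m by: vec(v)[i] = □ if v is not an endpoint of e_i; and if e_i = {u,v}, then vec(v)[i] = 0 if v < u and vec(v)[i] = 1 if u < v. Then G has a proper 3-coloring if and only if V(G) can be partitioned into three sets P_1, P_2, P_3 such that δ(vec(u), vec(v)) = 0 for all u, v lying in the same part; equivalently, if and only if the multiset {vec(v) : v ∈ V(G)} admits a completion together with a partition into at most 3 parts, each of diameter 0. -/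
open scoped Classical

/-!
Two vertices' vectors conflict only at the coordinate of an edge joining them, where one reads
`0` and the other `1`; so the classes of a partition with `δ = 0` inside each class are exactly
independent sets. For the completion form, a family of pairwise compatible incomplete vectors
has a common completion (put `1` exactly where some member has `1`), which makes each colour class
a diameter-`0` part; conversely, vertices whose completions fall into the same diameter-`0` part
share one completion, so their vectors are compatible.
-/

def Completes {ι : Type} (c : ι → Bool) (a : ι → Option Bool) : Prop :=
  ∀ i (x : Bool), a i = some x → c i = x

theorem pdist_eq_zero_iff {ι : Type} [Fintype ι] {a b : ι → Option Bool} :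
    pdist a b = 0 ↔ ∀ i (x y : Bool), a i = some x → b i = some y → x = y := by
  simp only [pdist, Finset.card_eq_zero, Finset.filter_eq_empty_iff, Finset.mem_univ,
    true_implies, not_exists, not_and, not_not]

theorem pdist_eq_zero_of_completes {ι : Type} [Fintype ι] {a b : ι → Option Bool}
    {c : ι → Bool} (ha : Completes c a) (hb : Completes c b) : pdist a b = 0 :=
  pdist_eq_zero_iff.2 fun i x y hx hy => (ha i x hx).symm.trans (hb i y hy)

theorem exists_completes_of_pairwise_pdist_eq_zero {S ι : Type} [Fintype ι]
    (vec : S → ι → Option Bool) (h : ∀ u v, pdist (vec u) (vec v) = 0) :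
    ∃ c : ι → Bool, ∀ v, Completes c (vec v) := by
  refine ⟨fun i => decide (∃ u, vec u i = some true), fun v i x hx => ?_⟩
  cases x with
  | true => exact decide_eq_true ⟨v, hx⟩
  | false =>
    refine decide_eq_false fun ⟨u, hu⟩ => ?_
    exact Bool.noConfusion (pdist_eq_zero_iff.1 (h u v) i true false hu hx)

theorem Multiset.bind_univ_filter_eq {V J : Type} [Fintype J] [DecidableEq J] (s : Multiset V)
    (c : V → J) :
    (Finset.univ : Finset J).val.bind (fun j => s.filter (c · = j)) = s := by
  ext v
  simp [Multiset.count_bind, Multiset.count_filter, Finset.sum_ite_eq]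

theorem hasDiamPartitionM_map_comp {V ι : Type} [Fintype ι] {k : ℕ} (s : Multiset V)
    (c : V → Fin k) (w : Fin k → ι → Bool) : HasDiamPartitionM (s.map (w ∘ c)) k 0 := by
  refine ⟨(Finset.univ : Finset (Fin k)).val.map fun j => (s.filter (c · = j)).map (w ∘ c),
    by simp, ?_, ?_⟩
  · rw [← Multiset.bind, ← Multiset.map_bind, Multiset.bind_univ_filter_eq]
  · intro p hp a ha b hb
    obtain ⟨j, -, rfl⟩ := Multiset.mem_map.1 hp
    obtain ⟨u, hu, rfl⟩ := Multiset.mem_map.1 ha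
    obtain ⟨v, hv, rfl⟩ := Multiset.mem_map.1 hb
    simp [(Multiset.mem_filter.1 hu).2, (Multiset.mem_filter.1 hv).2]

theorem exists_completion_hasDiamPartitionM_of_coloring {V ι : Type} [Fintype V] [Fintype ι]
    {vec : V → ι → Option Bool} {k : ℕ} (c : V → Fin k)
    (hc : ∀ u v, c u = c v → pdist (vec u) (vec v) = 0) :
    ∃ Mc, IsCompletion ((Finset.univ : Finset V).val.map vec) Mc ∧
      HasDiamPartitionM Mc k 0 := by
  have hclass (j : Fin k) : ∃ w : ι → Bool, ∀ v : {v // c v = j}, Completes w (vec v) :=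
    exists_completes_of_pairwise_pdist_eq_zero (fun v : {v // c v = j} => vec v)
      fun u v => hc u v (u.2.trans v.2.symm)
  choose w hw using hclass
  refine ⟨(Finset.univ : Finset V).val.map (w ∘ c), ?_, hasDiamPartitionM_map_comp _ c w⟩
  rw [IsCompletion, Multiset.rel_map]
  exact Multiset.rel_refl_of_refl_on fun v _ => hw (c v) ⟨v, rfl⟩

theorem exists_coloring_of_completion_hasDiamPartitionM {V ι : Type} [Fintype V] [Fintype ι]
    {vec : V → ι → Option Bool} {k : ℕ} {Mc : Multiset (ι → Bool)}
    (hMc : IsCompletion ((Finset.univ : Finset V).val.map vec) Mc)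
    (hP : HasDiamPartitionM Mc k 0) :
    ∃ c : V → Fin k, ∀ u v, c u = c v → pdist (vec u) (vec v) = 0 := by
  obtain ⟨P, hcard, hjoin, hdiam⟩ := hP
  have hcompletion (v : V) : ∃ f ∈ Mc, Completes f (vec v) :=
    Multiset.exists_mem_of_rel_of_mem hMc (Multiset.mem_map_of_mem vec (Finset.mem_univ_val v))
  choose f hfMc hf using hcompletion
  have hpart (v : V) : ∃ p ∈ P.toFinset, f v ∈ p := by
    simpa [← hjoin, Multiset.mem_join] using hfMc v
  choose part hpartP hfpart using hpart
  let index : P.toFinset ↪ Fin k := P.toFinset.equivFin.toEmbedding.trans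
    (Fin.castLEEmb ((Multiset.toFinset_card_le P).trans hcard))
  refine ⟨fun v => index ⟨part v, hpartP v⟩, fun u v huv => ?_⟩
  have hsame : part u = part v := congrArg Subtype.val (index.injective huv)
  have hfuv : f u = f v := hammingDist_eq_zero.1 <| Nat.le_zero.1 <|
    hdiam _ (Multiset.mem_toFinset.1 (hpartP u)) _ (hfpart u) _ (hsame ▸ hfpart v)
  exact pdist_eq_zero_of_completes (hf u) (hfuv ▸ hf v)

theorem exists_coloring_iff_exists_completion_hasDiamPartitionM {V ι : Type} [Fintype V]
    [Fintype ι] (vec : V → ι → Option Bool) (k : ℕ) :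
    (∃ c : V → Fin k, ∀ u v, c u = c v → pdist (vec u) (vec v) = 0) ↔
      ∃ Mc, IsCompletion ((Finset.univ : Finset V).val.map vec) Mc ∧ HasDiamPartitionM Mc k 0 :=
  ⟨fun ⟨c, hc⟩ => exists_completion_hasDiamPartitionM_of_coloring c hc,
    fun ⟨_, hMc, hP⟩ => exists_coloring_of_completion_hasDiamPartitionM hMc hP⟩

theorem SimpleGraph.colorable_iff_exists_fin {V : Type} (G : SimpleGraph V) (n : ℕ) :
    G.Colorable n ↔ ∃ c : V → Fin n, ∀ u v, c u = c v → ¬ G.Adj u v :=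
  ⟨fun ⟨C⟩ => ⟨C, fun _ _ h hadj => C.valid hadj h⟩,
    fun ⟨c, hc⟩ => ⟨SimpleGraph.Coloring.mk c fun hadj h => hc _ _ h hadj⟩⟩

section EdgeVectors

variable {V ι : Type} [Fintype ι] {G : SimpleGraph V} {e : ι → G.edgeSet}
  {vec : V → ι → Option Bool}

theorem not_adj_of_pdist_eq_zero [LinearOrder V] (he : Function.Surjective e)
    (hval : ∀ i u v, (e i).1 = s(u, v) → u < v → vec v i = some true ∧ vec u i = some false)
    {u v : V} (h : pdist (vec u) (vec v) = 0) : ¬ G.Adj u v := by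
  intro huv
  obtain ⟨i, hi⟩ := he ⟨s(u, v), huv⟩
  have hei : (e i).1 = s(u, v) := congrArg Subtype.val hi
  rcases lt_or_gt_of_ne (G.ne_of_adj huv) with hlt | hlt
  · obtain ⟨hv, hu⟩ := hval i u v hei hlt
    exact Bool.noConfusion (pdist_eq_zero_iff.1 h i _ _ hu hv)
  · obtain ⟨hu, hv⟩ := hval i v u (hei.trans Sym2.eq_swap) hlt
    exact Bool.noConfusion (pdist_eq_zero_iff.1 h i _ _ hu hv)

theorem pdist_eq_zero_of_not_adj (hnone : ∀ v i, v ∉ (e i).1 → vec v i = none)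
    {u v : V} (h : ¬ G.Adj u v) : pdist (vec u) (vec v) = 0 := by
  refine pdist_eq_zero_iff.2 fun i x y hx hy => ?_
  by_cases huv : u = v
  · subst huv
    exact Option.some.inj (hx.symm.trans hy)
  have hmem (w : V) (z : Bool) (hz : vec w i = some z) : w ∈ (e i).1 := by
    by_contra hw
    simp [hnone w i hw] at hz
  have hei : (e i).1 = s(u, v) := (Sym2.mem_and_mem_iff huv).1 ⟨hmem u x hx, hmem v y hy⟩
  exact absurd (G.mem_edgeSet.1 (hei ▸ (e i).2)) h

end EdgeVectors

theorem statement_17 {V : Type} [Fintype V] [LinearOrder V] {m : ℕ}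
    (G : SimpleGraph V) (e : Fin m ≃ G.edgeSet)
    (vec : V → Fin m → Option Bool)
    (hnone : ∀ v i, v ∉ (e i).1 → vec v i = none)
    (hval : ∀ i u v, (e i).1 = s(u, v) → u < v →
      vec v i = some true ∧ vec u i = some false) :
    (G.Colorable 3 ↔
      ∃ c : V → Fin 3, ∀ u v : V, c u = c v → pdist (vec u) (vec v) = 0) ∧
    (G.Colorable 3 ↔
      ∃ Mc : Multiset (Fin m → Bool),
        IsCompletion ((Finset.univ : Finset V).val.map vec) Mc ∧
        HasDiamPartitionM Mc 3 0) := by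
  have hpdist (u v : V) : pdist (vec u) (vec v) = 0 ↔ ¬ G.Adj u v :=
    ⟨not_adj_of_pdist_eq_zero e.surjective hval, pdist_eq_zero_of_not_adj hnone⟩
  have hcolor : G.Colorable 3 ↔
      ∃ c : V → Fin 3, ∀ u v : V, c u = c v → pdist (vec u) (vec v) = 0 := by
    simp only [hpdist, G.colorable_iff_exists_fin]
  exact ⟨hcolor, hcolor.trans (exists_coloring_iff_exists_completion_hasDiamPartitionM vec 3)⟩
end

section
/- Let s_1,…,s_n ∈ {0,1}^L and r ∈ ℕ. There exists a vector s ∈ {0,1}^L with δ(s, s_i) ≤ r for every i ∈ [n] if and only if the multiset M = {s_1,…,s_n, q} of vectors in {0,1,□}^L, where q = □^L is the all-missing vector, admits a completion M* (with witnessing bijection φ) containing a vector c ∈ M* such that δ(c, a) ≤ r for every a ∈ M*. (This is the correctness of the reduction from Closest String to In-Clustering-Completion with k = 1.) -/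
section Completion

variable {ι : Type}

theorem isCompletion_map_some_iff (M Mc : Multiset (ι → Bool)) :
    IsCompletion (M.map fun v i => some (v i)) Mc ↔ Mc = M := by
  have agree_iff_eq : (fun (v c : ι → Bool) => ∀ i x, some (v i) = some x → c i = x) =
      (· = ·) := by
    ext v c
    exact ⟨fun h => funext fun i => (h i (v i) rfl).symm,
      fun h i x hx => h ▸ Option.some.inj hx⟩
  rw [IsCompletion, Multiset.rel_map_left, agree_iff_eq, Multiset.rel_eq, eq_comm]

theorem isCompletion_cons_none_iff (M : Multiset (ι → Option Bool))
    (Mc : Multiset (ι → Bool)) :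
    IsCompletion ((fun _ => none) ::ₘ M) Mc ↔ ∃ b N, Mc = b ::ₘ N ∧ IsCompletion M N := by
  simp only [IsCompletion, Multiset.rel_cons_left, reduceCtorEq, false_imp_iff,
    implies_true, true_and]
  exact exists₂_congr fun _ _ => and_comm

end Completion

theorem exists_hammingDist_le_iff_exists_center_cons {ι : Type*} {β : ι → Type*} [Fintype ι]
    [∀ i, DecidableEq (β i)] (S : Multiset (∀ i, β i)) (r : ℕ) :
    (∃ c, ∀ a ∈ S, hammingDist c a ≤ r) ↔
      ∃ b, ∃ c ∈ b ::ₘ S, ∀ a ∈ b ::ₘ S, hammingDist c a ≤ r := by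
  constructor
  · rintro ⟨c, hc⟩
    refine ⟨c, c, Multiset.mem_cons_self _ _, fun a ha => ?_⟩
    rcases Multiset.mem_cons.1 ha with rfl | ha
    · simp
    · exact hc a ha
  · rintro ⟨b, c, -, hc⟩
    exact ⟨c, fun a ha => hc a (Multiset.mem_cons_of_mem ha)⟩

theorem statement_18 {L n : ℕ} (s : Fin n → Fin L → Bool) (r : ℕ) :
    (∃ c : Fin L → Bool, ∀ i : Fin n, hammingDist c (s i) ≤ r) ↔
    (∃ Mc : Multiset (Fin L → Bool),
      IsCompletion
        ((fun (_ : Fin L) => (none : Option Bool)) ::ₘ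
          (Finset.univ : Finset (Fin n)).val.map (fun i j => some (s i j))) Mc ∧
      ∃ c ∈ Mc, ∀ a ∈ Mc, hammingDist c a ≤ r) := by
  set S := (Finset.univ : Finset (Fin n)).val.map s
  have hS : (Finset.univ : Finset (Fin n)).val.map (fun i j => some (s i j)) =
      S.map fun v j => some (v j) := by
    rw [Multiset.map_map]; rfl
  have center_iff : (∃ c : Fin L → Bool, ∀ i, hammingDist c (s i) ≤ r) ↔
      ∃ c, ∀ a ∈ S, hammingDist c a ≤ r := by
    simp [S]
  rw [hS, center_iff, exists_hammingDist_le_iff_exists_center_cons]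
  simp only [isCompletion_cons_none_iff, isCompletion_map_some_iff]
  constructor
  · rintro ⟨b, hb⟩
    exact ⟨b ::ₘ S, ⟨b, S, rfl, rfl⟩, hb⟩
  · rintro ⟨_, ⟨b, _, rfl, rfl⟩, hb⟩
    exact ⟨b, hb⟩
end

section
/- Let G be a 3-regular finite simple graph with vertex set {v_1,…,v_n} and edge set {e_1,…,e_m}, and for each vertex v let a_v ∈ {0,1}^m be its edge-incidence vector, i.e., a_v[j] = 1 iff v is an endpoint of e_j. Let k ∈ ℕ and let M = {a_v : v ∈ V(G)}. Then G has a dominating set of size at most k if and only if there exists a subset S ⊆ M with |S| ≤ k such that every vector a_v ∈ M is within Hamming distance 4 of some vector in S. (This is the correctness of the reduction from Dominating Set on 3-regular graphs to In-Clustering with r = 4.) -/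
/-!
Each incidence vector has exactly three ones, and two distinct vertices share at most one
edge, the one joining them. So for `u ≠ v` the Hamming distance of `a u` and `a v` is
`6 - 2 = 4` if `u` and `v` are adjacent and `6` otherwise: being within distance `4` of `a u`
means lying in the closed neighbourhood of `u`, and dominating sets of `G` are exactly the
preimages of the admissible centre sets `S`.
-/

open Finset

theorem hammingDist_add_two_mul_card_inter {ι : Type*} [Fintype ι] (x y : ι → Bool) :
    hammingDist x y + 2 * #{i | x i = true ∧ y i = true} =
      #{i | x i = true} + #{i | y i = true} := by
  simp only [hammingDist, card_filter, mul_sum, ← sum_add_distrib]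
  refine sum_congr rfl fun i _ => ?_
  cases x i <;> cases y i <;> rfl

theorem exists_dominating_card_le_iff {V β : Type*} [Fintype V] [DecidableEq β]
    (G : SimpleGraph V) (f : V → β) (R : β → β → Prop)
    (hR : ∀ u v, R (f u) (f v) ↔ u = v ∨ G.Adj u v) (k : ℕ) :
    (∃ D : Finset V, #D ≤ k ∧ ∀ v, ∃ u ∈ D, u = v ∨ G.Adj u v) ↔
      ∃ S : Finset β, S ⊆ univ.image f ∧ #S ≤ k ∧ ∀ v, ∃ w ∈ S, R w (f v) := by
  constructor
  · rintro ⟨D, hDk, hD⟩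
    refine ⟨D.image f, image_subset_image (subset_univ D), card_image_le.trans hDk, fun v => ?_⟩
    obtain ⟨u, hu, huv⟩ := hD v
    exact ⟨f u, mem_image_of_mem f hu, (hR u v).2 huv⟩
  · rintro ⟨S, hSf, hSk, hS⟩
    have hsurj : Set.SurjOn f Set.univ S := fun w hw => by simpa using hSf hw
    obtain ⟨D, -, hinj, rfl⟩ := exists_subset_injOn_image_eq_of_surjOn Set.univ S hsurj
    refine ⟨D, (card_image_of_injOn hinj).symm.trans_le hSk, fun v => ?_⟩
    obtain ⟨w, hw, hwv⟩ := hS v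
    obtain ⟨u, hu, rfl⟩ := mem_image.1 hw
    exact ⟨u, hu, (hR u v).1 hwv⟩

namespace SimpleGraph

variable {V α : Type*} {G : SimpleGraph V} (e : α ≃ G.edgeSet) {a : V → α → Bool}

theorem card_incidence_eq_degree [Fintype α] (ha : ∀ v j, a v j = true ↔ v ∈ (e j).1) (v : V)
    [Fintype (G.neighborSet v)] :
    #{j | a v j = true} = G.degree v := by
  classical
  rw [← card_incidenceSet_eq_degree, ← Fintype.card_subtype]
  exact Fintype.card_congr ((e.subtypeEquiv fun j => ha v j).trans
    (Equiv.subtypeSubtypeEquivSubtypeInter (· ∈ G.edgeSet) (v ∈ ·)))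

theorem mem_common_incidence_iff (ha : ∀ v j, a v j = true ↔ v ∈ (e j).1) {u v : V}
    (huv : u ≠ v) (j : α) :
    a u j = true ∧ a v j = true ↔ (e j : Sym2 V) = s(u, v) := by
  rw [ha, ha, Sym2.mem_and_mem_iff huv]

theorem card_common_incidence_of_adj [Fintype α] (ha : ∀ v j, a v j = true ↔ v ∈ (e j).1)
    {u v : V} (hadj : G.Adj u v) :
    #{j | a u j = true ∧ a v j = true} = 1 := by
  refine card_eq_one.2
    ⟨e.symm ⟨s(u, v), hadj⟩, eq_singleton_iff_unique_mem.2 ⟨?_, fun j hj => ?_⟩⟩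
  · simp [mem_common_incidence_iff e ha hadj.ne]
  · rw [mem_filter, mem_common_incidence_iff e ha hadj.ne] at hj
    exact (e.symm_apply_eq.2 (Subtype.ext hj.2.symm)).symm

theorem card_common_incidence_of_not_adj [Fintype α] (ha : ∀ v j, a v j = true ↔ v ∈ (e j).1)
    {u v : V} (huv : u ≠ v) (hadj : ¬G.Adj u v) :
    #{j | a u j = true ∧ a v j = true} = 0 := by
  refine card_eq_zero.2 (filter_eq_empty_iff.2 fun j _ hj => hadj ?_)
  rw [← mem_edgeSet, ← (mem_common_incidence_iff e ha huv j).1 hj]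
  exact (e j).2

theorem hammingDist_incidence_le_iff [Fintype α] (ha : ∀ v j, a v j = true ↔ v ∈ (e j).1)
    [G.LocallyFinite] {d : ℕ} (hreg : G.IsRegularOfDegree d) (hd : 0 < d) (u v : V) :
    hammingDist (a u) (a v) ≤ 2 * d - 2 ↔ u = v ∨ G.Adj u v := by
  by_cases huv : u = v
  · simp [huv]
  have h := hammingDist_add_two_mul_card_inter (a u) (a v)
  rw [card_incidence_eq_degree e ha, card_incidence_eq_degree e ha, hreg u, hreg v] at h
  by_cases hadj : G.Adj u v
  · rw [card_common_incidence_of_adj e ha hadj] at h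
    simp only [hadj, or_true, iff_true]
    omega
  · rw [card_common_incidence_of_not_adj e ha huv hadj] at h
    simp only [huv, hadj, or_false, iff_false]
    omega

end SimpleGraph

theorem statement_19 {n m : ℕ} (G : SimpleGraph (Fin n)) [DecidableRel G.Adj]
    (hreg : ∀ v, G.degree v = 3)
    (e : Fin m ≃ G.edgeSet)
    (a : Fin n → Fin m → Bool)
    (ha : ∀ v j, a v j = true ↔ v ∈ (e j).1)
    (k : ℕ) :
    (∃ D : Finset (Fin n), D.card ≤ k ∧ ∀ v, ∃ u ∈ D, u = v ∨ G.Adj u v) ↔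
    (∃ S : Finset (Fin m → Bool), S ⊆ Finset.image a Finset.univ ∧ S.card ≤ k ∧
      ∀ v : Fin n, ∃ w ∈ S, hammingDist w (a v) ≤ 4) :=
  exists_dominating_card_le_iff G a (fun w x => hammingDist w x ≤ 4)
    (SimpleGraph.hammingDist_incidence_le_iff e ha hreg three_pos) k
end
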